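/- arXiv:math/0109096 — 5 statements merged into one kernel-verified Lean document; each statement's English description precedes it below -/
import Mathlib

section
/- For every Eulerian poset P = [0̂,1̂] of positive rank, Σ_{0̂ ≤ x ≤ 1̂} (-1)^{rk[0̂,x]} G([0̂,x]*, t) G([x,1̂], t) = 0, where ()* denotes the dual poset. Equivalently, G(−,t) and (-1)^{rk} G(−*,t) are mutually inverse under the convolution product on the incidence algebra of Eulerian posets. -/
open Polynomial
open scoped Classical

noncomputable section

/-- Truncation operator `τ_{<d/2}`: keep only terms of degree `i` with `2*i < d`. -/
def truncHalf (d : ℕ) (p : Polynomial ℤ) : Polynomial ℤ :=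
  ∑ i ∈ Finset.range ((d + 1) / 2), Polynomial.C (p.coeff i) * Polynomial.X ^ i

variable {α : Type*} [Fintype α] [PartialOrder α] [BoundedOrder α]

/-- `rk` is the rank function of a (finite, bounded) graded Eulerian poset. -/
structure EulerianRank (rk : α → ℕ) : Prop where
  rk_bot : rk ⊥ = 0
  rk_covby : ∀ a b : α, a ⋖ b → rk b = rk a + 1
  eulerian : ∀ a b : α, a < b →
    (Finset.univ.filter fun z => a ≤ z ∧ z ≤ b ∧ Even (rk z)).card =
    (Finset.univ.filter fun z => a ≤ z ∧ z ≤ b ∧ ¬ Even (rk z)).card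

/-- `G a b` and `H a b` satisfy Stanley's defining recursion for the `G`- and
`H`-polynomials of each interval `[a,b]` of the poset. -/
structure IsGH (rk : α → ℕ) (G H : α → α → Polynomial ℤ) : Prop where
  G_refl : ∀ a : α, G a a = 1
  H_eq : ∀ a b : α, a < b →
    H a b = ∑ x ∈ Finset.univ.filter (fun x => a < x ∧ x ≤ b),
      (Polynomial.X - 1) ^ (rk x - rk a - 1) * G x b
  G_eq : ∀ a b : α, a < b →
    G a b = truncHalf (rk b - rk a) ((1 - Polynomial.X) * H a b)

/-- `G a b` and `H a b` satisfy Stanley's defining recursion for the `G`- and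
`H`-polynomials of the *dual* interval `[a,b]*`. -/
structure IsGHDual (rk : α → ℕ) (G H : α → α → Polynomial ℤ) : Prop where
  G_refl : ∀ a : α, G a a = 1
  H_eq : ∀ a b : α, a < b →
    H a b = ∑ x ∈ Finset.univ.filter (fun x => a ≤ x ∧ x < b),
      (Polynomial.X - 1) ^ (rk b - rk x - 1) * G a x
  G_eq : ∀ a b : α, a < b →
    G a b = truncHalf (rk b - rk a) ((1 - Polynomial.X) * H a b)

end
section ConvAux
set_option linter.unusedSectionVars false

variable {α : Type*} [Fintype α] [PartialOrder α] [BoundedOrder α]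

private lemma truncHalf_coeff (d : ℕ) (p : Polynomial ℤ) (n : ℕ) :
    (truncHalf d p).coeff n = if n < (d + 1) / 2 then p.coeff n else 0 := by
  unfold truncHalf
  rw [Polynomial.finset_sum_coeff]
  simp_rw [Polynomial.coeff_C_mul, Polynomial.coeff_X_pow, mul_ite, mul_one, mul_zero]
  rw [Finset.sum_ite_eq (Finset.range ((d + 1) / 2)) n (fun i => p.coeff i)]
  simp [Finset.mem_range]

private lemma neg_one_pow_sub (m n : ℕ) (h : n ≤ m) :
    ((-1 : Polynomial ℤ)) ^ (m - n) = (-1) ^ (m + n) := by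
  have h2 : m + n = (m - n) + 2 * n := by omega
  rw [h2, pow_add, pow_mul]
  norm_num

variable {rk : α → ℕ}

private lemma rk_lt_of_lt (hE : EulerianRank rk) : ∀ a b : α, a < b → rk a < rk b := by
  have hsa : IsStronglyAtomic α := IsStronglyAtomic.of_wellFounded_lt wellFounded_lt
  suffices h : ∀ n (a b : α), (Finset.univ.filter fun x => a < x ∧ x ≤ b).card ≤ n →
      a < b → rk a < rk b from fun a b hab => h _ a b le_rfl hab
  intro n
  induction n with
  | zero =>
    intro a b hcard hab
    have hbmem : b ∈ Finset.univ.filter fun x => a < x ∧ x ≤ b := by simp [hab]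
    have := Finset.card_le_card (Finset.singleton_subset_iff.2 hbmem)
    simp only [Finset.card_singleton] at this
    omega
  | succ n ih =>
    intro a b hcard hab
    obtain ⟨c, hac, hcb⟩ := exists_covBy_le_of_lt hab
    have hrc : rk c = rk a + 1 := hE.rk_covby _ _ hac
    rcases eq_or_lt_of_le hcb with rfl | hlt
    · omega
    · have hsub : (Finset.univ.filter fun x => c < x ∧ x ≤ b) ⊆
          (Finset.univ.filter fun x => a < x ∧ x ≤ b).erase c := by
        intro x hx
        simp only [Finset.mem_filter, Finset.mem_univ, true_and] at hx
        refine Finset.mem_erase.2 ⟨ne_of_gt hx.1, ?_⟩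
        simp only [Finset.mem_filter, Finset.mem_univ, true_and]
        exact ⟨hac.lt.trans hx.1, hx.2⟩
      have hcmem : c ∈ (Finset.univ.filter fun x => a < x ∧ x ≤ b) := by
        simp [hac.lt, hlt.le]
      have hc1 : ((Finset.univ.filter fun x => a < x ∧ x ≤ b).erase c).card ≤ n := by
        rw [Finset.card_erase_of_mem hcmem]; omega
      have := ih c b ((Finset.card_le_card hsub).trans hc1) hlt
      omega

private lemma rk_le_of_le (hE : EulerianRank rk) {a b : α} (h : a ≤ b) : rk a ≤ rk b := by
  rcases eq_or_lt_of_le h with rfl | h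
  · exact le_rfl
  · exact (rk_lt_of_lt hE a b h).le

private lemma euler_sum (hE : EulerianRank rk) {a b : α} (hab : a < b) :
    ∑ c ∈ Finset.univ.filter (fun c => a ≤ c ∧ c ≤ b), ((-1 : Polynomial ℤ)) ^ (rk c) = 0 := by
  rw [← Finset.sum_filter_add_sum_filter_not _ (fun c => Even (rk c)), Finset.filter_filter,
    Finset.filter_filter]
  have h1 : ∑ c ∈ Finset.univ.filter (fun c => (a ≤ c ∧ c ≤ b) ∧ Even (rk c)),
      ((-1 : Polynomial ℤ)) ^ (rk c)
      = (Finset.univ.filter fun z => a ≤ z ∧ z ≤ b ∧ Even (rk z)).card • (1 : Polynomial ℤ) := by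
    rw [show (Finset.univ.filter fun c => (a ≤ c ∧ c ≤ b) ∧ Even (rk c))
        = (Finset.univ.filter fun z => a ≤ z ∧ z ≤ b ∧ Even (rk z)) by
      apply Finset.filter_congr; intro x _; simp [and_assoc]]
    rw [← Finset.sum_const]
    apply Finset.sum_congr rfl
    intro x hx
    simp only [Finset.mem_filter] at hx
    exact Even.neg_one_pow hx.2.2.2
  have h2 : ∑ c ∈ Finset.univ.filter (fun c => (a ≤ c ∧ c ≤ b) ∧ ¬ Even (rk c)),
      ((-1 : Polynomial ℤ)) ^ (rk c)
      = (Finset.univ.filter fun z => a ≤ z ∧ z ≤ b ∧ ¬ Even (rk z)).card • (-1 : Polynomial ℤ) := by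
    rw [show (Finset.univ.filter fun c => (a ≤ c ∧ c ≤ b) ∧ ¬ Even (rk c))
        = (Finset.univ.filter fun z => a ≤ z ∧ z ≤ b ∧ ¬ Even (rk z)) by
      apply Finset.filter_congr; intro x _; simp [and_assoc]]
    rw [← Finset.sum_const]
    apply Finset.sum_congr rfl
    intro x hx
    simp only [Finset.mem_filter] at hx
    exact Odd.neg_one_pow (Nat.not_even_iff_odd.1 hx.2.2.2)
  rw [h1, h2, hE.eulerian a b hab]
  simp

/-- The matrix of `(-1)^rk * Gd`. -/
private noncomputable def Amat (rk : α → ℕ) (Gd : α → α → Polynomial ℤ) :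
    Matrix α α (Polynomial ℤ) :=
  Matrix.of fun a b => if a ≤ b then (-1) ^ (rk b - rk a) * Gd a b else 0

/-- The matrix of `G`. -/
private noncomputable def Bmat (G : α → α → Polynomial ℤ) : Matrix α α (Polynomial ℤ) :=
  Matrix.of fun a b => if a ≤ b then G a b else 0

/-- The matrix of `(X-1)^rk`. -/
private noncomputable def Kmat (rk : α → ℕ) : Matrix α α (Polynomial ℤ) :=
  Matrix.of fun a b => if a ≤ b then (Polynomial.X - 1) ^ (rk b - rk a) else 0

/-- The matrix of `(1-X)^rk`. -/
private noncomputable def Kmat' (rk : α → ℕ) : Matrix α α (Polynomial ℤ) :=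
  Matrix.of fun a b => if a ≤ b then (1 - Polynomial.X) ^ (rk b - rk a) else 0

private lemma KK (hE : EulerianRank rk) :
    Kmat' rk * Kmat rk = (1 : Matrix α α (Polynomial ℤ)) := by
  refine Matrix.ext fun a b => ?_
  rw [Matrix.mul_apply, Matrix.one_apply]
  by_cases hab : a ≤ b
  · rcases eq_or_lt_of_le hab with rfl | hab'
    · rw [if_pos rfl, Finset.sum_eq_single a]
      · simp [Kmat, Kmat']
      · intro c _ hca
        simp only [Kmat, Kmat', Matrix.of_apply]
        by_cases h1 : a ≤ c
        · by_cases h2 : c ≤ a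
          · exact absurd (le_antisymm h2 h1) hca
          · rw [if_neg h2, mul_zero]
        · rw [if_neg h1, zero_mul]
      · intro h; exact absurd (Finset.mem_univ a) h
    · rw [if_neg (ne_of_lt hab')]
      have hterm : ∀ c : α, Kmat' rk a c * Kmat rk c b
          = if a ≤ c ∧ c ≤ b then
              ((-1 : Polynomial ℤ)) ^ (rk c) *
                (((-1 : Polynomial ℤ)) ^ (rk a) * (Polynomial.X - 1) ^ (rk b - rk a))
            else 0 := by
        intro c
        simp only [Kmat, Kmat', Matrix.of_apply]
        by_cases h1 : a ≤ c
        · by_cases h2 : c ≤ b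
          · rw [if_pos h1, if_pos h2, if_pos ⟨h1, h2⟩]
            have e1 : rk a ≤ rk c := rk_le_of_le hE h1
            have e2 : rk c ≤ rk b := rk_le_of_le hE h2
            rw [show ((1 : Polynomial ℤ) - Polynomial.X) = -(Polynomial.X - 1) by ring, neg_pow,
              neg_one_pow_sub _ _ e1, mul_assoc, ← pow_add,
              show (rk c - rk a) + (rk b - rk c) = rk b - rk a by omega, pow_add]
            ring
          · rw [if_neg h2, mul_zero, if_neg (by tauto)]
        · rw [if_neg h1, zero_mul, if_neg (by tauto)]
      rw [Finset.sum_congr rfl fun c _ => hterm c, ← Finset.sum_filter, ← Finset.sum_mul,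
        euler_sum hE hab', zero_mul]
  · rw [if_neg (fun h => hab (le_of_eq h))]
    apply Finset.sum_eq_zero
    intro c _
    simp only [Kmat, Kmat', Matrix.of_apply]
    by_cases h1 : a ≤ c
    · by_cases h2 : c ≤ b
      · exact absurd (h1.trans h2) hab
      · rw [if_neg h2, mul_zero]
    · rw [if_neg h1, zero_mul]

private lemma G_high {G H : α → α → Polynomial ℤ} (hGH : IsGH rk G H) {a b : α} (hab : a < b)
    (i : ℕ) (hi : rk b - rk a ≤ 2 * i) : (G a b).coeff i = 0 := by
  rw [hGH.G_eq a b hab, truncHalf_coeff, if_neg (by omega)]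

private lemma Gd_high {Gd Hd : α → α → Polynomial ℤ} (hGHd : IsGHDual rk Gd Hd) {a b : α}
    (hab : a < b) (i : ℕ) (hi : rk b - rk a ≤ 2 * i) : (Gd a b).coeff i = 0 := by
  rw [hGHd.G_eq a b hab, truncHalf_coeff, if_neg (by omega)]

private lemma F_low (hE : EulerianRank rk) {G H : α → α → Polynomial ℤ} (hGH : IsGH rk G H)
    (a b : α) (i : ℕ) (hi : 2 * i < rk b - rk a) : ((Kmat rk * Bmat G) a b).coeff i = 0 := by
  by_cases hab : a < b
  · have key : (Kmat rk * Bmat G) a b = G a b + (Polynomial.X - 1) * H a b := by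
      rw [Matrix.mul_apply]
      have hterm : ∀ c : α, Kmat rk a c * Bmat G c b
          = if a ≤ c ∧ c ≤ b then (Polynomial.X - 1) ^ (rk c - rk a) * G c b else 0 := by
        intro c
        simp only [Kmat, Bmat, Matrix.of_apply]
        by_cases h1 : a ≤ c
        · by_cases h2 : c ≤ b
          · rw [if_pos h1, if_pos h2, if_pos ⟨h1, h2⟩]
          · rw [if_neg h2, mul_zero, if_neg (by tauto)]
        · rw [if_neg h1, zero_mul, if_neg (by tauto)]
      rw [Finset.sum_congr rfl fun c _ => hterm c, ← Finset.sum_filter]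
      have hsplit : (Finset.univ.filter fun c => a ≤ c ∧ c ≤ b)
          = insert a (Finset.univ.filter fun c => a < c ∧ c ≤ b) := by
        ext c
        simp only [Finset.mem_insert, Finset.mem_filter, Finset.mem_univ, true_and]
        constructor
        · rintro ⟨h1, h2⟩
          rcases eq_or_lt_of_le h1 with rfl | h
          · exact Or.inl rfl
          · exact Or.inr ⟨h, h2⟩
        · rintro (rfl | ⟨h1, h2⟩)
          · exact ⟨le_rfl, hab.le⟩
          · exact ⟨h1.le, h2⟩
      rw [hsplit, Finset.sum_insert (by simp), Nat.sub_self, pow_zero, one_mul,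
        hGH.H_eq a b hab, Finset.mul_sum]
      congr 1
      apply Finset.sum_congr rfl
      intro c hc
      simp only [Finset.mem_filter, Finset.mem_univ, true_and] at hc
      have h1 : rk a < rk c := rk_lt_of_lt hE a c hc.1
      obtain ⟨m, hm⟩ : ∃ m, rk c - rk a = m + 1 := ⟨rk c - rk a - 1, by omega⟩
      rw [hm, Nat.add_sub_cancel, pow_succ]
      ring
    rw [key, Polynomial.coeff_add, hGH.G_eq a b hab, truncHalf_coeff, if_pos (by omega),
      show ((Polynomial.X : Polynomial ℤ) - 1) = -(1 - Polynomial.X) by ring, neg_mul,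
      Polynomial.coeff_neg]
    ring
  · have hne : a ≠ b := fun h => by subst h; omega
    have hnle : ¬ a ≤ b := fun h => hab (lt_of_le_of_ne h hne)
    have hz : (Kmat rk * Bmat G) a b = 0 := by
      rw [Matrix.mul_apply]
      apply Finset.sum_eq_zero
      intro c _
      simp only [Kmat, Bmat, Matrix.of_apply]
      by_cases h1 : a ≤ c
      · by_cases h2 : c ≤ b
        · exact absurd (h1.trans h2) hnle
        · rw [if_neg h2, mul_zero]
      · rw [if_neg h1, zero_mul]
    rw [hz, Polynomial.coeff_zero]

private lemma U_low (hE : EulerianRank rk) {Gd Hd : α → α → Polynomial ℤ}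
    (hGHd : IsGHDual rk Gd Hd) (a b : α) (i : ℕ) (hi : 2 * i < rk b - rk a) :
    ((Amat rk Gd * Kmat' rk) a b).coeff i = 0 := by
  by_cases hab : a < b
  · have key : (Amat rk Gd * Kmat' rk) a b
        = ((-1 : Polynomial ℤ)) ^ (rk b - rk a) * (Gd a b + (Polynomial.X - 1) * Hd a b) := by
      rw [Matrix.mul_apply]
      have hterm : ∀ c : α, Amat rk Gd a c * Kmat' rk c b
          = if a ≤ c ∧ c ≤ b then
              ((-1 : Polynomial ℤ)) ^ (rk b - rk a) *
                ((Polynomial.X - 1) ^ (rk b - rk c) * Gd a c)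
            else 0 := by
        intro c
        simp only [Amat, Kmat', Matrix.of_apply]
        by_cases h1 : a ≤ c
        · by_cases h2 : c ≤ b
          · rw [if_pos h1, if_pos h2, if_pos ⟨h1, h2⟩]
            have e1 : rk a ≤ rk c := rk_le_of_le hE h1
            have e2 : rk c ≤ rk b := rk_le_of_le hE h2
            rw [show ((1 : Polynomial ℤ) - Polynomial.X) = -(Polynomial.X - 1) by ring,
              neg_pow (Polynomial.X - 1 : Polynomial ℤ) (rk b - rk c)]
            have hs : ((-1 : Polynomial ℤ)) ^ (rk c - rk a) * ((-1 : Polynomial ℤ)) ^ (rk b - rk c)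
                = ((-1 : Polynomial ℤ)) ^ (rk b - rk a) := by
              rw [neg_one_pow_sub _ _ e1, neg_one_pow_sub _ _ e2,
                neg_one_pow_sub _ _ (e1.trans e2), ← pow_add,
                show rk c + rk a + (rk b + rk c) = (rk b + rk a) + 2 * rk c by ring, pow_add,
                pow_mul]
              norm_num
            linear_combination (Gd a c * (Polynomial.X - 1) ^ (rk b - rk c)) * hs
          · rw [if_neg h2, mul_zero, if_neg (by tauto)]
        · rw [if_neg h1, zero_mul, if_neg (by tauto)]
      rw [Finset.sum_congr rfl fun c _ => hterm c, ← Finset.sum_filter, ← Finset.mul_sum]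
      congr 1
      have hsplit : (Finset.univ.filter fun c => a ≤ c ∧ c ≤ b)
          = insert b (Finset.univ.filter fun c => a ≤ c ∧ c < b) := by
        ext c
        simp only [Finset.mem_insert, Finset.mem_filter, Finset.mem_univ, true_and]
        constructor
        · rintro ⟨h1, h2⟩
          rcases eq_or_lt_of_le h2 with rfl | h
          · exact Or.inl rfl
          · exact Or.inr ⟨h1, h⟩
        · rintro (rfl | ⟨h1, h2⟩)
          · exact ⟨hab.le, le_rfl⟩
          · exact ⟨h1, h2.le⟩
      rw [hsplit, Finset.sum_insert (by simp), Nat.sub_self, pow_zero, one_mul,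
        hGHd.H_eq a b hab, Finset.mul_sum]
      congr 1
      apply Finset.sum_congr rfl
      intro c hc
      simp only [Finset.mem_filter, Finset.mem_univ, true_and] at hc
      have h1 : rk c < rk b := rk_lt_of_lt hE c b hc.2
      obtain ⟨m, hm⟩ : ∃ m, rk b - rk c = m + 1 := ⟨rk b - rk c - 1, by omega⟩
      rw [hm, Nat.add_sub_cancel, pow_succ]
      ring
    rw [key, show ((-1 : Polynomial ℤ)) ^ (rk b - rk a)
        = Polynomial.C ((-1 : ℤ) ^ (rk b - rk a)) by simp [map_pow], Polynomial.coeff_C_mul]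
    have hinner : (Gd a b + (Polynomial.X - 1) * Hd a b).coeff i = 0 := by
      rw [Polynomial.coeff_add, hGHd.G_eq a b hab, truncHalf_coeff, if_pos (by omega),
        show ((Polynomial.X : Polynomial ℤ) - 1) = -(1 - Polynomial.X) by ring, neg_mul,
        Polynomial.coeff_neg]
      ring
    rw [hinner, mul_zero]
  · have hne : a ≠ b := fun h => by subst h; omega
    have hnle : ¬ a ≤ b := fun h => hab (lt_of_le_of_ne h hne)
    have hz : (Amat rk Gd * Kmat' rk) a b = 0 := by
      rw [Matrix.mul_apply]
      apply Finset.sum_eq_zero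
      intro c _
      simp only [Amat, Kmat', Matrix.of_apply]
      by_cases h1 : a ≤ c
      · by_cases h2 : c ≤ b
        · exact absurd (h1.trans h2) hnle
        · rw [if_neg h2, mul_zero]
      · rw [if_neg h1, zero_mul]
    rw [hz, Polynomial.coeff_zero]

end ConvAux


/-- For every Eulerian poset `P = [⊥,⊤]` of positive rank,
`∑_{⊥ ≤ x ≤ ⊤} (-1)^{rk[⊥,x]} G([⊥,x]*, t) G([x,⊤], t) = 0`. -/
theorem stmt1 {α : Type*} [Fintype α] [PartialOrder α] [BoundedOrder α]
    (rk : α → ℕ) (hE : EulerianRank rk) (hpos : 0 < rk (⊤ : α))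
    (G H Gd Hd : α → α → Polynomial ℤ)
    (hGH : IsGH rk G H) (hGHd : IsGHDual rk Gd Hd) :
    ∑ x : α, (-1 : Polynomial ℤ) ^ (rk x) * Gd ⊥ x * G x ⊤ = 0 := by
  classical
  have hb0 : rk (⊥ : α) = 0 := hE.rk_bot
  have hbt : (⊥ : α) < ⊤ := by
    refine lt_of_le_of_ne bot_le fun h => ?_
    rw [← h, hb0] at hpos
    exact lt_irrefl 0 hpos
  have hEq : (∑ x : α, (-1 : Polynomial ℤ) ^ (rk x) * Gd ⊥ x * G x ⊤)
      = (Amat rk Gd * Bmat G) (⊥ : α) (⊤ : α) := by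
    rw [Matrix.mul_apply]
    apply Finset.sum_congr rfl
    intro x _
    simp only [Amat, Bmat, Matrix.of_apply, if_pos (bot_le : (⊥ : α) ≤ x),
      if_pos (le_top : x ≤ (⊤ : α)), hb0, Nat.sub_zero]
  have hfact : Amat rk Gd * Bmat G = (Amat rk Gd * Kmat' rk) * (Kmat rk * Bmat G) := by
    rw [Matrix.mul_assoc, ← Matrix.mul_assoc (Kmat' rk), KK hE, Matrix.one_mul]
  rw [hEq]
  refine Polynomial.ext fun i => ?_
  rw [Polynomial.coeff_zero]
  rcases lt_or_ge (2 * i) (rk (⊤ : α)) with hi | hi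
  · rw [hfact, Matrix.mul_apply, Polynomial.finset_sum_coeff]
    apply Finset.sum_eq_zero
    intro z _
    rw [Polynomial.coeff_mul]
    apply Finset.sum_eq_zero
    intro jk hjk
    rw [Finset.HasAntidiagonal.mem_antidiagonal] at hjk
    by_cases hj : 2 * jk.1 < rk z - rk (⊥ : α)
    · rw [U_low hE hGHd _ _ _ hj, zero_mul]
    · have hz : rk z ≤ rk (⊤ : α) := rk_le_of_le hE le_top
      have hk : 2 * jk.2 < rk (⊤ : α) - rk z := by omega
      rw [F_low hE hGH _ _ _ hk, mul_zero]
  · rw [Matrix.mul_apply, Polynomial.finset_sum_coeff]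
    apply Finset.sum_eq_zero
    intro x _
    simp only [Amat, Bmat, Matrix.of_apply, if_pos (bot_le : (⊥ : α) ≤ x),
      if_pos (le_top : x ≤ (⊤ : α)), hb0, Nat.sub_zero]
    by_cases hx1 : x = ⊥
    · subst hx1
      rw [hb0, pow_zero, one_mul, hGHd.G_refl, one_mul]
      exact G_high hGH hbt i (by omega)
    · by_cases hx2 : x = ⊤
      · subst hx2
        rw [hGH.G_refl, mul_one,
          show ((-1 : Polynomial ℤ)) ^ (rk (⊤ : α)) = Polynomial.C ((-1 : ℤ) ^ (rk (⊤ : α)))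
            by simp [map_pow],
          Polynomial.coeff_C_mul, Gd_high hGHd hbt i (by omega), mul_zero]
      · have hx1' : (⊥ : α) < x := lt_of_le_of_ne bot_le (Ne.symm hx1)
        have hx2' : x < (⊤ : α) := lt_of_le_of_ne le_top hx2
        rw [mul_assoc,
          show ((-1 : Polynomial ℤ)) ^ (rk x) = Polynomial.C ((-1 : ℤ) ^ (rk x))
            by simp [map_pow],
          Polynomial.coeff_C_mul]
        have h : (Gd ⊥ x * G x ⊤).coeff i = 0 := by
          rw [Polynomial.coeff_mul]
          apply Finset.sum_eq_zero
          intro jk hjk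
          rw [Finset.HasAntidiagonal.mem_antidiagonal] at hjk
          by_cases hj : rk x - rk (⊥ : α) ≤ 2 * jk.1
          · rw [Gd_high hGHd hx1' _ hj, zero_mul]
          · rw [G_high hGH hx2' _ (by omega), mul_zero]
        rw [h, mul_zero]
end

section
/- For every Eulerian poset P of positive rank, Σ_{0̂ ≤ x ≤ 1̂} G([0̂,x], t) G([x,1̂]*, t) (-1)^{rk[x,1̂]} = 0. -/
open Polynomial
open scoped Classical

namespace Stmt2Aux

open Polynomial Finset

/-! ### Generic polynomial lemmas -/

lemma truncHalf_coeff (d : ℕ) (p : Polynomial ℤ) (j : ℕ) :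
    (truncHalf d p).coeff j = if 2 * j < d then p.coeff j else 0 := by
  unfold truncHalf
  rw [finset_sum_coeff]
  simp only [coeff_C_mul, coeff_X_pow, mul_ite, mul_one, mul_zero]
  rw [Finset.sum_ite_eq (Finset.range ((d + 1) / 2)) j (fun i => p.coeff i)]
  simp only [Finset.mem_range]
  exact if_congr (by omega) rfl rfl

lemma neg_one_pow_sub {R : Type*} [CommRing R] {m k : ℕ} (h : k ≤ m) :
    (-1 : R) ^ (m - k) = (-1) ^ m * (-1) ^ k := by
  have h2 : ((-1 : R) ^ k) * ((-1) ^ k) = 1 := by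
    rw [← pow_add, ← two_mul, pow_mul, neg_one_sq, one_pow]
  calc (-1 : R) ^ (m - k) = (-1) ^ (m - k) * ((-1) ^ k * (-1) ^ k) := by rw [h2, mul_one]
    _ = ((-1) ^ (m - k) * (-1) ^ k) * (-1) ^ k := by ring
    _ = (-1) ^ m * (-1) ^ k := by rw [← pow_add, Nat.sub_add_cancel h]

lemma natDegree_X_sub_one_pow_le (e : ℕ) :
    ((Polynomial.X - 1 : Polynomial ℤ) ^ e).natDegree ≤ e := by
  have h1 : (X - 1 : Polynomial ℤ).natDegree ≤ 1 := by
    have : (X - 1 : Polynomial ℤ) = X - C 1 := by simp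
    rw [this, natDegree_X_sub_C]
  refine le_trans natDegree_pow_le ?_
  calc e * (X - 1 : Polynomial ℤ).natDegree ≤ e * 1 := Nat.mul_le_mul_left e h1
    _ = e := by omega

lemma natDegree_one_sub_X_le : (1 - Polynomial.X : Polynomial ℤ).natDegree ≤ 1 := by
  have h : (1 - X : Polynomial ℤ) = -(X - C 1) := by simp
  rw [h, natDegree_neg, natDegree_X_sub_C]

lemma reflect_X_sub_one_pow (m : ℕ) :
    Polynomial.reflect m ((Polynomial.X - 1 : Polynomial ℤ) ^ m) = (1 - Polynomial.X) ^ m := by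
  induction m with
  | zero => simp [Polynomial.reflect_one]
  | succ k ih =>
    have h1 : (X - 1 : Polynomial ℤ).natDegree ≤ 1 := by
      have : (X - 1 : Polynomial ℤ) = X - C 1 := by simp
      rw [this, natDegree_X_sub_C]
    rw [pow_succ, Polynomial.reflect_mul _ _ (natDegree_X_sub_one_pow_le k) h1, ih,
      Polynomial.reflect_sub, Polynomial.reflect_one_X, Polynomial.reflect_one, pow_one,
      pow_succ]

lemma reflect_sum {β : Type*} (N : ℕ) (s : Finset β) (f : β → Polynomial ℤ) :
    Polynomial.reflect N (∑ i ∈ s, f i) = ∑ i ∈ s, Polynomial.reflect N (f i) := by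
  classical
  induction s using Finset.induction_on with
  | empty => simp
  | insert _ _ h ih => rw [Finset.sum_insert h, Finset.sum_insert h, Polynomial.reflect_add, ih]

lemma neg_one_pow_C (k : ℕ) : ((-1 : Polynomial ℤ)) ^ k = Polynomial.C ((-1 : ℤ) ^ k) := by
  rw [map_pow, map_neg, map_one]

lemma coeff_mul_neg_pow (p : Polynomial ℤ) (k j : ℕ) :
    (p * (-1) ^ k).coeff j = (-1) ^ k * p.coeff j := by
  rw [neg_one_pow_C, mul_comm, Polynomial.coeff_C_mul]

lemma reflect_mul_neg_pow (N : ℕ) (p : Polynomial ℤ) (k : ℕ) :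
    Polynomial.reflect N (p * (-1) ^ k) = Polynomial.reflect N p * (-1) ^ k := by
  rw [neg_one_pow_C, mul_comm, Polynomial.reflect_C_mul, mul_comm]

lemma trunc_reflect (n : ℕ) (f : Polynomial ℤ) (hdeg : f.natDegree ≤ n)
    (hanti : Polynomial.reflect n f = -f) :
    truncHalf n f - f = Polynomial.reflect n (truncHalf n f) := by
  ext j
  have hd : ∀ i, n < i → f.coeff i = 0 := fun i hi =>
    Polynomial.coeff_eq_zero_of_natDegree_lt (lt_of_le_of_lt hdeg hi)
  have ha : ∀ i, i ≤ n → f.coeff (n - i) = -f.coeff i := by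
    intro i hi
    have h := congrArg (fun p => Polynomial.coeff p i) hanti
    simpa [Polynomial.coeff_reflect, Polynomial.revAt_le hi] using h
  rw [Polynomial.coeff_sub, Polynomial.coeff_reflect]
  by_cases hjn : j ≤ n
  · rw [Polynomial.revAt_le hjn, truncHalf_coeff, truncHalf_coeff]
    rcases lt_trichotomy (2 * j) n with h | h | h
    · rw [if_pos h, if_neg (by omega)]; ring
    · have hj0 : f.coeff j = 0 := by
        have h1 := ha j hjn
        rw [show n - j = j by omega] at h1
        omega
      rw [if_neg (by omega), if_neg (by omega)]; simp [hj0]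
    · rw [if_neg (by omega), if_pos (by omega), ha j hjn]; ring
  · push_neg at hjn
    rw [Polynomial.revAt_eq_self_of_lt hjn, truncHalf_coeff, if_neg (by omega),
      hd j hjn]
    ring

/-! ### Order and Euler lemmas -/

variable {α : Type*} [Fintype α] [PartialOrder α] [BoundedOrder α] {rk : α → ℕ}

lemma rk_lt_of_lt (hE : EulerianRank rk) : ∀ a b : α, a < b → rk a < rk b := by
  have hsa : IsStronglyAtomic α := IsStronglyAtomic.of_wellFounded_lt wellFounded_lt
  intro a
  apply WellFounded.induction (wellFounded_gt (α := α)) a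
    (C := fun a => ∀ b, a < b → rk a < rk b)
  intro x IH b hxb
  obtain ⟨c, hxc, hcb⟩ := hxb.exists_covby_le
  have hc := hE.rk_covby x c hxc
  rcases hcb.eq_or_lt with rfl | hlt
  · omega
  · exact lt_trans (by omega) (IH c hxc.lt b hlt)

lemma rk_le_of_le (hE : EulerianRank rk) {a b : α} (h : a ≤ b) : rk a ≤ rk b := by
  rcases h.eq_or_lt with rfl | h
  · exact le_rfl
  · exact (rk_lt_of_lt hE a b h).le

lemma euler_sum {R : Type*} [CommRing R] (hE : EulerianRank rk) {a b : α} (hab : a < b) :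
    ∑ x ∈ Finset.univ.filter (fun x => a ≤ x ∧ x ≤ b), ((-1 : R) ^ (rk x)) = 0 := by
  have h := hE.eulerian a b hab
  rw [← Finset.sum_filter_add_sum_filter_not (Finset.univ.filter fun x => a ≤ x ∧ x ≤ b)
    (fun x => Even (rk x))]
  rw [Finset.filter_filter, Finset.filter_filter]
  have hc1 : (Finset.univ.filter fun z => (a ≤ z ∧ z ≤ b) ∧ Even (rk z)) =
      (Finset.univ.filter fun z => a ≤ z ∧ z ≤ b ∧ Even (rk z)) := by
    apply Finset.filter_congr; intro x _; simp [and_assoc]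
  have hc2 : (Finset.univ.filter fun z => (a ≤ z ∧ z ≤ b) ∧ ¬ Even (rk z)) =
      (Finset.univ.filter fun z => a ≤ z ∧ z ≤ b ∧ ¬ Even (rk z)) := by
    apply Finset.filter_congr; intro x _; simp [and_assoc]
  rw [Finset.sum_congr hc1 (fun x hx => by
      simp only [Finset.mem_filter] at hx
      exact Even.neg_one_pow hx.2.2.2),
    Finset.sum_congr hc2 (fun x hx => by
      simp only [Finset.mem_filter, Nat.not_even_iff_odd] at hx
      exact Odd.neg_one_pow hx.2.2.2)]
  rw [Finset.sum_const, Finset.sum_const, h]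
  simp

lemma euler_sum_top {R : Type*} [CommRing R] (hE : EulerianRank rk) {a b : α} (hab : a < b) :
    ∑ x ∈ Finset.univ.filter (fun x => a ≤ x ∧ x ≤ b), ((-1 : R) ^ (rk b - rk x)) = 0 := by
  have h : ∀ x ∈ Finset.univ.filter (fun x => a ≤ x ∧ x ≤ b),
      ((-1 : R) ^ (rk b - rk x)) = (-1) ^ (rk b) * (-1) ^ (rk x) := by
    intro x hx
    simp only [Finset.mem_filter] at hx
    exact neg_one_pow_sub (rk_le_of_le hE hx.2.2)
  rw [Finset.sum_congr rfl h, ← Finset.mul_sum, euler_sum hE hab, mul_zero]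

lemma interval_eq_insert_left {a b : α} (hab : a ≤ b) :
    Finset.univ.filter (fun x => a ≤ x ∧ x ≤ b) =
      insert a (Finset.univ.filter (fun x => a < x ∧ x ≤ b)) := by
  ext x
  simp only [Finset.mem_filter, Finset.mem_univ, true_and, Finset.mem_insert]
  constructor
  · rintro ⟨h1, h2⟩
    rcases h1.eq_or_lt with rfl | h
    · exact Or.inl rfl
    · exact Or.inr ⟨h, h2⟩
  · rintro (rfl | ⟨h1, h2⟩)
    · exact ⟨le_rfl, hab⟩
    · exact ⟨h1.le, h2⟩

lemma interval_eq_insert_right {a b : α} (hab : a ≤ b) :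
    Finset.univ.filter (fun x => a ≤ x ∧ x ≤ b) =
      insert b (Finset.univ.filter (fun x => a ≤ x ∧ x < b)) := by
  ext x
  simp only [Finset.mem_filter, Finset.mem_univ, true_and, Finset.mem_insert]
  constructor
  · rintro ⟨h1, h2⟩
    rcases h2.eq_or_lt with rfl | h
    · exact Or.inl rfl
    · exact Or.inr ⟨h1, h⟩
  · rintro (rfl | ⟨h1, h2⟩)
    · exact ⟨hab, le_rfl⟩
    · exact ⟨h1, h2.le⟩

lemma not_mem_left {a b : α} :
    a ∉ Finset.univ.filter (fun x => a < x ∧ x ≤ b) := by simp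

lemma not_mem_right {a b : α} :
    b ∉ Finset.univ.filter (fun x => a ≤ x ∧ x < b) := by simp

lemma euler_strict_left {R : Type*} [CommRing R] (hE : EulerianRank rk) {a y : α} (hay : a < y) :
    ∑ x ∈ Finset.univ.filter (fun x => a < x ∧ x ≤ y), ((-1 : R) ^ (rk x - rk a)) = -1 := by
  have h0 : ∑ x ∈ Finset.univ.filter (fun x => a ≤ x ∧ x ≤ y),
      ((-1 : R) ^ (rk x - rk a)) = 0 := by
    have h : ∀ x ∈ Finset.univ.filter (fun x => a ≤ x ∧ x ≤ y),
        ((-1 : R) ^ (rk x - rk a)) = (-1) ^ (rk x) * (-1) ^ (rk a) := by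
      intro x hx
      simp only [Finset.mem_filter] at hx
      exact neg_one_pow_sub (rk_le_of_le hE hx.2.1)
    rw [Finset.sum_congr rfl h, ← Finset.sum_mul, euler_sum hE hay, zero_mul]
  rw [interval_eq_insert_left hay.le, Finset.sum_insert not_mem_left] at h0
  simp only [Nat.sub_self, pow_zero] at h0
  linear_combination h0

lemma euler_strict_right {R : Type*} [CommRing R] (hE : EulerianRank rk) {y b : α} (hyb : y < b) :
    ∑ x ∈ Finset.univ.filter (fun x => y ≤ x ∧ x < b), ((-1 : R) ^ (rk b - rk x)) = -1 := by
  have h0 := euler_sum_top (R := R) hE hyb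
  rw [interval_eq_insert_right hyb.le, Finset.sum_insert not_mem_right] at h0
  simp only [Nat.sub_self, pow_zero] at h0
  linear_combination h0

lemma sum_swap_cond {M : Type*} [AddCommMonoid M]
    (P : α → Prop) (Q : α → α → Prop) (P' : α → Prop) (Q' : α → α → Prop)
    [DecidablePred P] [∀ x, DecidablePred (Q x)] [DecidablePred P']
    [∀ y, DecidablePred fun x => Q' y x]
    (h : ∀ x y, P x ∧ Q x y ↔ P' y ∧ Q' y x)
    (F : α → α → M) :
    ∑ x ∈ Finset.univ.filter P, ∑ y ∈ Finset.univ.filter (Q x), F x y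
      = ∑ y ∈ Finset.univ.filter P', ∑ x ∈ Finset.univ.filter (fun x => Q' y x), F x y := by
  have L : ∀ (R : α → Prop) (S : α → α → Prop) (g : α → α → M)
      [DecidablePred R] [∀ x, DecidablePred (S x)],
      ∑ x ∈ Finset.univ.filter R, ∑ y ∈ Finset.univ.filter (S x), g x y
        = ∑ x : α, ∑ y : α, if R x ∧ S x y then g x y else 0 := by
    intro R S g _ _
    rw [Finset.sum_filter]
    refine Finset.sum_congr rfl fun x _ => ?_
    rw [Finset.sum_filter]
    by_cases hR : R x
    · simp [hR]
    · simp [hR]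
  rw [L, L, Finset.sum_comm]
  exact Finset.sum_congr rfl fun y _ => Finset.sum_congr rfl fun x _ => if_congr (h x y) rfl rfl

/-! ### Degree bounds for G -/

variable {G H Gd Hd : α → α → Polynomial ℤ}

lemma G_coeff_zero (hGH : IsGH rk G H) {a b : α} (hab : a < b) {j : ℕ}
    (hj : rk b - rk a ≤ 2 * j) : (G a b).coeff j = 0 := by
  rw [hGH.G_eq a b hab, truncHalf_coeff, if_neg (by omega)]

lemma Gd_coeff_zero (hGHd : IsGHDual rk Gd Hd) {a b : α} (hab : a < b) {j : ℕ}
    (hj : rk b - rk a ≤ 2 * j) : (Gd a b).coeff j = 0 := by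
  rw [hGHd.G_eq a b hab, truncHalf_coeff, if_neg (by omega)]

lemma G_natDegree_le (hGH : IsGH rk G H) {a b : α} (hab : a ≤ b) :
    (G a b).natDegree ≤ rk b - rk a := by
  rcases hab.eq_or_lt with rfl | h
  · simp [hGH.G_refl]
  · rw [Polynomial.natDegree_le_iff_coeff_eq_zero]
    intro N hN
    exact G_coeff_zero hGH h (by omega)

lemma Gd_natDegree_le (hGHd : IsGHDual rk Gd Hd) {a b : α} (hab : a ≤ b) :
    (Gd a b).natDegree ≤ rk b - rk a := by
  rcases hab.eq_or_lt with rfl | h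
  · simp [hGHd.G_refl]
  · rw [Polynomial.natDegree_le_iff_coeff_eq_zero]
    intro N hN
    exact Gd_coeff_zero hGHd h (by omega)

lemma G_natDegree_half (hGH : IsGH rk G H) {a b : α} (hab : a < b) :
    (G a b).natDegree ≤ (rk b - rk a - 1) / 2 := by
  rw [Polynomial.natDegree_le_iff_coeff_eq_zero]
  intro N hN
  exact G_coeff_zero hGH hab (by omega)

lemma Gd_natDegree_half (hGHd : IsGHDual rk Gd Hd) {a b : α} (hab : a < b) :
    (Gd a b).natDegree ≤ (rk b - rk a - 1) / 2 := by
  rw [Polynomial.natDegree_le_iff_coeff_eq_zero]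
  intro N hN
  exact Gd_coeff_zero hGHd hab (by omega)

/-! ### The key reflection identity (Dehn--Sommerville for the G-polynomials) -/

theorem star_stard (hE : EulerianRank rk) (hGH : IsGH rk G H) (hGHd : IsGHDual rk Gd Hd) :
    ∀ n : ℕ, ∀ a b : α, a ≤ b → rk b - rk a = n →
      ((∑ x ∈ Finset.univ.filter (fun x => a ≤ x ∧ x ≤ b),
          (Polynomial.X - 1) ^ (rk x - rk a) * G x b) = Polynomial.reflect n (G a b)) ∧
      ((∑ x ∈ Finset.univ.filter (fun x => a ≤ x ∧ x ≤ b),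
          (Polynomial.X - 1) ^ (rk b - rk x) * Gd a x) = Polynomial.reflect n (Gd a b)) := by
  intro n
  induction n using Nat.strong_induction_on with
  | _ n IH =>
  intro a b hab hn
  rcases hab.eq_or_lt with rfl | hlt
  · have hn0 : n = 0 := by omega
    subst hn0
    have hfil : Finset.univ.filter (fun x => a ≤ x ∧ x ≤ a) = {a} := by
      ext x; simp [le_antisymm_iff, and_comm]
    constructor <;> simp [hfil, hGH.G_refl, hGHd.G_refl, Polynomial.reflect_one]
  · have hrk := rk_lt_of_lt hE a b hlt
    have hn1 : 1 ≤ n := by omega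
    constructor
    · -- primal statement
      set S1 : Polynomial ℤ := ∑ x ∈ Finset.univ.filter (fun x => a < x ∧ x ≤ b),
          (X - 1) ^ (rk x - rk a) * G x b with hS1
      have hf : (1 - X) * H a b = -S1 := by
        rw [hGH.H_eq a b hlt, Finset.mul_sum, hS1, ← Finset.sum_neg_distrib]
        refine Finset.sum_congr rfl fun x hx => ?_
        simp only [Finset.mem_filter, Finset.mem_univ, true_and] at hx
        have hm : 1 ≤ rk x - rk a := by have := rk_lt_of_lt hE a x hx.1; omega
        have he : rk x - rk a - 1 + 1 = rk x - rk a := by omega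
        calc (1 - X : Polynomial ℤ) * ((X - 1) ^ (rk x - rk a - 1) * G x b)
            = -((X - 1) ^ (rk x - rk a - 1 + 1) * G x b) := by ring
          _ = -((X - 1) ^ (rk x - rk a) * G x b) := by rw [he]
      have hdegH : (H a b).natDegree ≤ n - 1 := by
        rw [hGH.H_eq a b hlt]
        apply Polynomial.natDegree_sum_le_of_forall_le
        intro x hx
        simp only [Finset.mem_filter, Finset.mem_univ, true_and] at hx
        have h1 := rk_lt_of_lt hE a x hx.1
        have h2 := rk_le_of_le hE hx.2
        refine le_trans Polynomial.natDegree_mul_le ?_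
        have hp := natDegree_X_sub_one_pow_le (rk x - rk a - 1)
        have hg := G_natDegree_le hGH hx.2
        omega
      have hdegf : ((1 - X : Polynomial ℤ) * H a b).natDegree ≤ n := by
        refine le_trans Polynomial.natDegree_mul_le ?_
        have := natDegree_one_sub_X_le
        omega
      have hreflS1 : Polynomial.reflect n S1 = -S1 := by
        rw [hS1, reflect_sum]
        have hterm : ∀ x ∈ Finset.univ.filter (fun x => a < x ∧ x ≤ b),
            Polynomial.reflect n ((X - 1) ^ (rk x - rk a) * G x b)
              = ∑ y ∈ Finset.univ.filter (fun y => x ≤ y ∧ y ≤ b),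
                  ((-1) ^ (rk x - rk a) : Polynomial ℤ) *
                    ((X - 1) ^ (rk y - rk a) * G y b) := by
          intro x hx
          simp only [Finset.mem_filter, Finset.mem_univ, true_and] at hx
          have h1 := rk_lt_of_lt hE a x hx.1
          have h2 := rk_le_of_le hE hx.2
          rw [show n = (rk x - rk a) + (rk b - rk x) by omega,
            Polynomial.reflect_mul _ _ (natDegree_X_sub_one_pow_le _) (G_natDegree_le hGH hx.2),
            reflect_X_sub_one_pow,
            ← (IH (rk b - rk x) (by omega) x b hx.2 rfl).1,
            show ((1 - X : Polynomial ℤ)) ^ (rk x - rk a)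
              = (-1) ^ (rk x - rk a) * (X - 1) ^ (rk x - rk a) by
                rw [show (1 - X : Polynomial ℤ) = -1 * (X - 1) by ring, mul_pow],
            mul_assoc, Finset.mul_sum, Finset.mul_sum]
          refine Finset.sum_congr rfl fun y hy => ?_
          simp only [Finset.mem_filter, Finset.mem_univ, true_and] at hy
          have h3 := rk_le_of_le hE hy.1
          have he : rk x - rk a + (rk y - rk x) = rk y - rk a := by omega
          congr 1
          calc ((X - 1 : Polynomial ℤ) ^ (rk x - rk a) * ((X - 1) ^ (rk y - rk x) * G y b))
              = (X - 1) ^ (rk x - rk a + (rk y - rk x)) * G y b := by ring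
            _ = (X - 1) ^ (rk y - rk a) * G y b := by rw [he]
        rw [Finset.sum_congr rfl hterm]
        refine Eq.trans (sum_swap_cond (fun x => a < x ∧ x ≤ b) (fun x y => x ≤ y ∧ y ≤ b)
            (fun y => a < y ∧ y ≤ b) (fun y x => a < x ∧ x ≤ y)
            (by
              intro x y
              constructor
              · rintro ⟨⟨h1, h2⟩, h3, h4⟩; exact ⟨⟨lt_of_lt_of_le h1 h3, h4⟩, h1, h3⟩
              · rintro ⟨⟨h1, h2⟩, h3, h4⟩; exact ⟨⟨h3, le_trans h4 h2⟩, h4, h2⟩)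
            (fun x y => ((-1) ^ (rk x - rk a) : Polynomial ℤ) *
              ((X - 1) ^ (rk y - rk a) * G y b))) ?_
        rw [← Finset.sum_neg_distrib]
        refine Finset.sum_congr rfl fun y hy => ?_
        simp only [Finset.mem_filter, Finset.mem_univ, true_and] at hy
        show (∑ x ∈ Finset.univ.filter (fun x => a < x ∧ x ≤ y),
            ((-1 : Polynomial ℤ)) ^ (rk x - rk a) * ((X - 1) ^ (rk y - rk a) * G y b)) = _
        rw [← Finset.sum_mul, euler_strict_left hE hy.1, neg_one_mul]
      rw [interval_eq_insert_left hab, Finset.sum_insert not_mem_left, Nat.sub_self,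
        pow_zero, one_mul]
      have hanti : Polynomial.reflect n ((1 - X) * H a b) = -((1 - X) * H a b) := by
        rw [hf, Polynomial.reflect_neg, hreflS1, neg_neg]
      have hGab : G a b = truncHalf n ((1 - X) * H a b) := by
        rw [hGH.G_eq a b hlt, hn]
      have hS1f : S1 = -((1 - X) * H a b) := by rw [hf, neg_neg]
      rw [← hS1, hGab, hS1f, ← sub_eq_add_neg]
      exact trunc_reflect n _ hdegf hanti
    · -- dual statement
      set S2 : Polynomial ℤ := ∑ x ∈ Finset.univ.filter (fun x => a ≤ x ∧ x < b),
          (X - 1) ^ (rk b - rk x) * Gd a x with hS2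
      have hf : (1 - X) * Hd a b = -S2 := by
        rw [hGHd.H_eq a b hlt, Finset.mul_sum, hS2, ← Finset.sum_neg_distrib]
        refine Finset.sum_congr rfl fun x hx => ?_
        simp only [Finset.mem_filter, Finset.mem_univ, true_and] at hx
        have hm : 1 ≤ rk b - rk x := by have := rk_lt_of_lt hE x b hx.2; omega
        have he : rk b - rk x - 1 + 1 = rk b - rk x := by omega
        calc (1 - X : Polynomial ℤ) * ((X - 1) ^ (rk b - rk x - 1) * Gd a x)
            = -((X - 1) ^ (rk b - rk x - 1 + 1) * Gd a x) := by ring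
          _ = -((X - 1) ^ (rk b - rk x) * Gd a x) := by rw [he]
      have hdegH : (Hd a b).natDegree ≤ n - 1 := by
        rw [hGHd.H_eq a b hlt]
        apply Polynomial.natDegree_sum_le_of_forall_le
        intro x hx
        simp only [Finset.mem_filter, Finset.mem_univ, true_and] at hx
        have h1 := rk_le_of_le hE hx.1
        have h2 := rk_lt_of_lt hE x b hx.2
        refine le_trans Polynomial.natDegree_mul_le ?_
        have hp := natDegree_X_sub_one_pow_le (rk b - rk x - 1)
        have hg := Gd_natDegree_le hGHd hx.1
        omega
      have hdegf : ((1 - X : Polynomial ℤ) * Hd a b).natDegree ≤ n := by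
        refine le_trans Polynomial.natDegree_mul_le ?_
        have := natDegree_one_sub_X_le
        omega
      have hreflS2 : Polynomial.reflect n S2 = -S2 := by
        rw [hS2, reflect_sum]
        have hterm : ∀ x ∈ Finset.univ.filter (fun x => a ≤ x ∧ x < b),
            Polynomial.reflect n ((X - 1) ^ (rk b - rk x) * Gd a x)
              = ∑ y ∈ Finset.univ.filter (fun y => a ≤ y ∧ y ≤ x),
                  ((-1) ^ (rk b - rk x) : Polynomial ℤ) *
                    ((X - 1) ^ (rk b - rk y) * Gd a y) := by
          intro x hx
          simp only [Finset.mem_filter, Finset.mem_univ, true_and] at hx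
          have h1 := rk_le_of_le hE hx.1
          have h2 := rk_lt_of_lt hE x b hx.2
          rw [show n = (rk b - rk x) + (rk x - rk a) by omega,
            Polynomial.reflect_mul _ _ (natDegree_X_sub_one_pow_le _) (Gd_natDegree_le hGHd hx.1),
            reflect_X_sub_one_pow,
            ← (IH (rk x - rk a) (by omega) a x hx.1 rfl).2,
            show ((1 - X : Polynomial ℤ)) ^ (rk b - rk x)
              = (-1) ^ (rk b - rk x) * (X - 1) ^ (rk b - rk x) by
                rw [show (1 - X : Polynomial ℤ) = -1 * (X - 1) by ring, mul_pow],
            mul_assoc, Finset.mul_sum, Finset.mul_sum]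
          refine Finset.sum_congr rfl fun y hy => ?_
          simp only [Finset.mem_filter, Finset.mem_univ, true_and] at hy
          have h3 := rk_le_of_le hE hy.2
          have he : rk b - rk x + (rk x - rk y) = rk b - rk y := by omega
          congr 1
          calc ((X - 1 : Polynomial ℤ) ^ (rk b - rk x) * ((X - 1) ^ (rk x - rk y) * Gd a y))
              = (X - 1) ^ (rk b - rk x + (rk x - rk y)) * Gd a y := by ring
            _ = (X - 1) ^ (rk b - rk y) * Gd a y := by rw [he]
        rw [Finset.sum_congr rfl hterm]
        refine Eq.trans (sum_swap_cond (fun x => a ≤ x ∧ x < b) (fun x y => a ≤ y ∧ y ≤ x)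
            (fun y => a ≤ y ∧ y < b) (fun y x => y ≤ x ∧ x < b)
            (by
              intro x y
              constructor
              · rintro ⟨⟨h1, h2⟩, h3, h4⟩; exact ⟨⟨h3, lt_of_le_of_lt h4 h2⟩, h4, h2⟩
              · rintro ⟨⟨h1, h2⟩, h3, h4⟩; exact ⟨⟨le_trans h1 h3, h4⟩, h1, h3⟩)
            (fun x y => ((-1) ^ (rk b - rk x) : Polynomial ℤ) *
              ((X - 1) ^ (rk b - rk y) * Gd a y))) ?_
        rw [← Finset.sum_neg_distrib]
        refine Finset.sum_congr rfl fun y hy => ?_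
        simp only [Finset.mem_filter, Finset.mem_univ, true_and] at hy
        show (∑ x ∈ Finset.univ.filter (fun x => y ≤ x ∧ x < b),
            ((-1 : Polynomial ℤ)) ^ (rk b - rk x) * ((X - 1) ^ (rk b - rk y) * Gd a y)) = _
        rw [← Finset.sum_mul, euler_strict_right hE hy.2, neg_one_mul]
      rw [interval_eq_insert_right hab, Finset.sum_insert not_mem_right, Nat.sub_self,
        pow_zero, one_mul]
      have hanti : Polynomial.reflect n ((1 - X) * Hd a b) = -((1 - X) * Hd a b) := by
        rw [hf, Polynomial.reflect_neg, hreflS2, neg_neg]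
      have hGab : Gd a b = truncHalf n ((1 - X) * Hd a b) := by
        rw [hGHd.G_eq a b hlt, hn]
      have hS2f : S2 = -((1 - X) * Hd a b) := by rw [hf, neg_neg]
      rw [← hS2, hGab, hS2f, ← sub_eq_add_neg]
      exact trunc_reflect n _ hdegf hanti

/-! ### The triple-sum reindexing -/

lemma sum_swap3 {M : Type*} [AddCommMonoid M] {a b : α} (F : α → α → α → M) :
    (∑ x ∈ Finset.univ.filter (fun x => a ≤ x ∧ x ≤ b),
      ∑ y ∈ Finset.univ.filter (fun y => a ≤ y ∧ y ≤ x),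
        ∑ z ∈ Finset.univ.filter (fun z => x ≤ z ∧ z ≤ b), F x y z)
  = ∑ y ∈ Finset.univ.filter (fun y => a ≤ y ∧ y ≤ b),
      ∑ z ∈ Finset.univ.filter (fun z => y ≤ z ∧ z ≤ b),
        ∑ x ∈ Finset.univ.filter (fun x => y ≤ x ∧ x ≤ z), F x y z := by
  have L3 : ∀ (P : α → Prop) (Q : α → α → Prop) (R : α → α → α → Prop)
      (g : α → α → α → M)
      [DecidablePred P] [∀ u, DecidablePred (Q u)] [∀ u v, DecidablePred (R u v)],
      (∑ u ∈ Finset.univ.filter P, ∑ v ∈ Finset.univ.filter (Q u),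
          ∑ w ∈ Finset.univ.filter (R u v), g u v w)
        = ∑ u : α, ∑ v : α, ∑ w : α, if P u ∧ Q u v ∧ R u v w then g u v w else 0 := by
    intro P Q R g _ _ _
    rw [Finset.sum_filter]
    refine Finset.sum_congr rfl fun u _ => ?_
    rw [Finset.sum_filter]
    by_cases hP : P u
    · simp only [hP, true_and]
      refine Finset.sum_congr rfl fun v _ => ?_
      rw [Finset.sum_filter]
      by_cases hQ : Q u v
      · simp only [hQ, true_and, if_true]
      · simp [hQ]
    · simp [hP]
  rw [L3, L3, Finset.sum_comm]
  refine Eq.trans (Finset.sum_congr rfl fun y _ => Finset.sum_comm) ?_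
  refine Finset.sum_congr rfl fun y _ => Finset.sum_congr rfl fun z _ =>
    Finset.sum_congr rfl fun x _ => if_congr ?_ rfl rfl
  constructor
  · rintro ⟨⟨h1, h2⟩, ⟨h3, h4⟩, h5, h6⟩
    exact ⟨⟨h3, le_trans h4 h2⟩, ⟨le_trans h4 h5, h6⟩, h4, h5⟩
  · rintro ⟨⟨h1, h2⟩, ⟨h3, h4⟩, h5, h6⟩
    exact ⟨⟨le_trans h1 h5, le_trans h6 h4⟩, ⟨h1, h5⟩, h6, h4⟩

/-! ### The main convolution identity -/

theorem T_zero (hE : EulerianRank rk) (hGH : IsGH rk G H) (hGHd : IsGHDual rk Gd Hd) :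
    ∀ n : ℕ, ∀ a b : α, a < b → rk b - rk a = n →
      (∑ x ∈ Finset.univ.filter (fun x => a ≤ x ∧ x ≤ b),
        G a x * Gd x b * (-1 : Polynomial ℤ) ^ (rk b - rk x)) = 0 := by
  intro n
  induction n using Nat.strong_induction_on with
  | _ n IH =>
  intro a b hab hn
  have hrk := rk_lt_of_lt hE a b hab
  have hn1 : 1 ≤ n := by omega
  set T : Polynomial ℤ := ∑ x ∈ Finset.univ.filter (fun x => a ≤ x ∧ x ≤ b),
      G a x * Gd x b * (-1 : Polynomial ℤ) ^ (rk b - rk x) with hT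
  -- (i) all coefficients in degrees ≥ n/2 vanish
  have hTcoeff : ∀ j : ℕ, n ≤ 2 * j → T.coeff j = 0 := by
    intro j hj
    rw [hT, Polynomial.finset_sum_coeff]
    refine Finset.sum_eq_zero fun x hx => ?_
    simp only [Finset.mem_filter, Finset.mem_univ, true_and] at hx
    rw [coeff_mul_neg_pow]
    have hzero : (G a x * Gd x b).coeff j = 0 := by
      rcases hx.1.eq_or_lt with rfl | hax
      · rw [hGH.G_refl, one_mul]
        exact Gd_coeff_zero hGHd hab (by omega)
      · rcases hx.2.eq_or_lt with rfl | hxb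
        · rw [hGHd.G_refl, mul_one]
          exact G_coeff_zero hGH hab (by omega)
        · have h1 := rk_lt_of_lt hE a x hax
          have h2 := rk_lt_of_lt hE x b hxb
          refine Polynomial.coeff_eq_zero_of_natDegree_lt
            (lt_of_le_of_lt Polynomial.natDegree_mul_le ?_)
          have hg := G_natDegree_half hGH hax
          have hgd := Gd_natDegree_half hGHd hxb
          omega
    rw [hzero, mul_zero]
  -- (ii) T is fixed by reflection in degree n
  have hrefl : Polynomial.reflect n T = T := by
    rw [hT, reflect_sum]
    have hterm : ∀ x ∈ Finset.univ.filter (fun x => a ≤ x ∧ x ≤ b),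
        Polynomial.reflect n (G a x * Gd x b * (-1) ^ (rk b - rk x))
          = ∑ y ∈ Finset.univ.filter (fun y => a ≤ y ∧ y ≤ x),
              ∑ z ∈ Finset.univ.filter (fun z => x ≤ z ∧ z ≤ b),
                ((X - 1) ^ (rk y - rk a) * G y x) * ((X - 1) ^ (rk b - rk z) * Gd x z)
                  * (-1) ^ (rk b - rk x) := by
      intro x hx
      simp only [Finset.mem_filter, Finset.mem_univ, true_and] at hx
      have h1 := rk_le_of_le hE hx.1
      have h2 := rk_le_of_le hE hx.2
      rw [reflect_mul_neg_pow,
        show n = (rk x - rk a) + (rk b - rk x) by omega,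
        Polynomial.reflect_mul _ _ (G_natDegree_le hGH hx.1) (Gd_natDegree_le hGHd hx.2),
        ← (star_stard hE hGH hGHd (rk x - rk a) a x hx.1 rfl).1,
        ← (star_stard hE hGH hGHd (rk b - rk x) x b hx.2 rfl).2,
        Finset.sum_mul_sum]
      simp only [Finset.sum_mul]
    rw [Finset.sum_congr rfl hterm, sum_swap3]
    -- now reorganize the z-sum, splitting off z = y
    have expand : ∀ y ∈ Finset.univ.filter (fun y => a ≤ y ∧ y ≤ b),
        (∑ z ∈ Finset.univ.filter (fun z => y ≤ z ∧ z ≤ b),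
          ∑ x ∈ Finset.univ.filter (fun x => y ≤ x ∧ x ≤ z),
            ((X - 1) ^ (rk y - rk a) * G y x) * ((X - 1) ^ (rk b - rk z) * Gd x z)
              * (-1) ^ (rk b - rk x))
        = (∑ x ∈ Finset.univ.filter (fun x => y ≤ x ∧ x ≤ y),
            ((X - 1) ^ (rk y - rk a) * G y x) * ((X - 1) ^ (rk b - rk y) * Gd x y)
              * (-1) ^ (rk b - rk x))
          + ∑ z ∈ Finset.univ.filter (fun z => y < z ∧ z ≤ b),
              ∑ x ∈ Finset.univ.filter (fun x => y ≤ x ∧ x ≤ z),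
                ((X - 1) ^ (rk y - rk a) * G y x) * ((X - 1) ^ (rk b - rk z) * Gd x z)
                  * (-1) ^ (rk b - rk x) := by
      intro y hy
      simp only [Finset.mem_filter, Finset.mem_univ, true_and] at hy
      rw [interval_eq_insert_left hy.2, Finset.sum_insert not_mem_left]
    rw [Finset.sum_congr rfl expand, Finset.sum_add_distrib]
    -- the diagonal part vanishes by the Euler relation
    have partA : (∑ y ∈ Finset.univ.filter (fun y => a ≤ y ∧ y ≤ b),
        ∑ x ∈ Finset.univ.filter (fun x => y ≤ x ∧ x ≤ y),
          ((X - 1) ^ (rk y - rk a) * G y x) * ((X - 1) ^ (rk b - rk y) * Gd x y)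
            * (-1) ^ (rk b - rk x))
        = 0 := by
      have hdiag : ∀ y ∈ Finset.univ.filter (fun y => a ≤ y ∧ y ≤ b),
          (∑ x ∈ Finset.univ.filter (fun x => y ≤ x ∧ x ≤ y),
            ((X - 1) ^ (rk y - rk a) * G y x) * ((X - 1) ^ (rk b - rk y) * Gd x y)
              * (-1) ^ (rk b - rk x))
          = (X - 1) ^ n * (-1) ^ (rk b - rk y) := by
        intro y hy
        simp only [Finset.mem_filter, Finset.mem_univ, true_and] at hy
        have h1 := rk_le_of_le hE hy.1
        have h2 := rk_le_of_le hE hy.2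
        have hfil : Finset.univ.filter (fun x => y ≤ x ∧ x ≤ y) = {y} := by
          ext x; simp [le_antisymm_iff, and_comm]
        rw [hfil, Finset.sum_singleton, hGH.G_refl, hGHd.G_refl]
        calc ((X - 1 : Polynomial ℤ) ^ (rk y - rk a) * 1) *
              ((X - 1) ^ (rk b - rk y) * 1) * (-1) ^ (rk b - rk y)
            = (X - 1) ^ (rk y - rk a + (rk b - rk y)) * (-1) ^ (rk b - rk y) := by ring
          _ = (X - 1) ^ n * (-1) ^ (rk b - rk y) := by
              rw [show rk y - rk a + (rk b - rk y) = n by omega]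
      rw [Finset.sum_congr rfl hdiag, ← Finset.mul_sum, euler_sum_top hE hab, mul_zero]
    -- the strictly off-diagonal part reduces to the term (y,z) = (a,b)
    have hzero : ∀ y z : α, a ≤ y → y < z → z ≤ b → ¬(y = a ∧ z = b) →
        (∑ x ∈ Finset.univ.filter (fun x => y ≤ x ∧ x ≤ z),
          ((X - 1) ^ (rk y - rk a) * G y x) * ((X - 1) ^ (rk b - rk z) * Gd x z)
            * (-1) ^ (rk b - rk x))
        = 0 := by
      intro y z hay hyz hzb hne
      have h1 := rk_le_of_le hE hay
      have h2 := rk_le_of_le hE hzb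
      have h3 := rk_lt_of_lt hE y z hyz
      have hlt' : rk z - rk y < n := by
        rcases Nat.lt_or_ge (rk z - rk y) n with h | h
        · exact h
        · exfalso
          have hya : a = y := by
            rcases hay.eq_or_lt with h' | hlt2
            · exact h'
            · exfalso; have := rk_lt_of_lt hE a y hlt2; omega
          have hzb2 : z = b := by
            rcases hzb.eq_or_lt with h' | hlt2
            · exact h'
            · exfalso; have := rk_lt_of_lt hE z b hlt2; omega
          exact hne ⟨hya.symm, hzb2⟩
      have hsign : ∀ x ∈ Finset.univ.filter (fun x => y ≤ x ∧ x ≤ z),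
          ((X - 1 : Polynomial ℤ) ^ (rk y - rk a) * G y x) *
            ((X - 1) ^ (rk b - rk z) * Gd x z) * (-1) ^ (rk b - rk x)
          = ((X - 1) ^ (rk y - rk a) * (X - 1) ^ (rk b - rk z) * (-1) ^ (rk b - rk z)) *
              (G y x * Gd x z * (-1) ^ (rk z - rk x)) := by
        intro x hx
        simp only [Finset.mem_filter, Finset.mem_univ, true_and] at hx
        have h4 := rk_le_of_le hE hx.1
        have h5 := rk_le_of_le hE hx.2
        rw [show (-1 : Polynomial ℤ) ^ (rk b - rk x)
            = (-1) ^ (rk z - rk x) * (-1) ^ (rk b - rk z) by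
          rw [← pow_add, show rk z - rk x + (rk b - rk z) = rk b - rk x by omega]]
        ring
      rw [Finset.sum_congr rfl hsign, ← Finset.mul_sum,
        IH (rk z - rk y) hlt' y z hyz rfl, mul_zero]
    have partB : (∑ y ∈ Finset.univ.filter (fun y => a ≤ y ∧ y ≤ b),
        ∑ z ∈ Finset.univ.filter (fun z => y < z ∧ z ≤ b),
          ∑ x ∈ Finset.univ.filter (fun x => y ≤ x ∧ x ≤ z),
            ((X - 1) ^ (rk y - rk a) * G y x) * ((X - 1) ^ (rk b - rk z) * Gd x z)
              * (-1) ^ (rk b - rk x))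
        = ∑ x ∈ Finset.univ.filter (fun x => a ≤ x ∧ x ≤ b),
            G a x * Gd x b * (-1) ^ (rk b - rk x) := by
      rw [Finset.sum_eq_single a]
      · rw [Finset.sum_eq_single b]
        · have hfin : ∀ x ∈ Finset.univ.filter (fun x => a ≤ x ∧ x ≤ b),
              ((X - 1 : Polynomial ℤ) ^ (rk a - rk a) * G a x) *
                ((X - 1) ^ (rk b - rk b) * Gd x b) * (-1) ^ (rk b - rk x)
              = G a x * Gd x b * (-1) ^ (rk b - rk x) := by
            intro x _
            simp only [Nat.sub_self, pow_zero, one_mul]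
          exact Finset.sum_congr rfl hfin
        · intro z hz hzb
          simp only [Finset.mem_filter, Finset.mem_univ, true_and] at hz
          exact hzero a z le_rfl hz.1 hz.2 (fun h => hzb h.2)
        · intro hb
          exact absurd (by simp [hab, hab.le] : b ∈ Finset.univ.filter
            (fun z => a < z ∧ z ≤ b)) hb
      · intro y hy hya
        simp only [Finset.mem_filter, Finset.mem_univ, true_and] at hy
        refine Finset.sum_eq_zero fun z hz => ?_
        simp only [Finset.mem_filter, Finset.mem_univ, true_and] at hz
        exact hzero y z hy.1 hz.1 hz.2 (fun h => hya h.1)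
      · intro ha
        exact absurd (by simp [hab.le] : a ∈ Finset.univ.filter
          (fun y => a ≤ y ∧ y ≤ b)) ha
    rw [partA, partB, zero_add]
  -- (iii) conclude that T = 0
  have hfinal : T = 0 := by
    ext j
    by_cases hj : n ≤ 2 * j
    · simp [hTcoeff j hj]
    · push_neg at hj
      have hjn : j ≤ n := by omega
      have h1 : T.coeff j = T.coeff (n - j) := by
        conv_lhs => rw [← hrefl]
        rw [Polynomial.coeff_reflect, Polynomial.revAt_le hjn]
      rw [h1, hTcoeff (n - j) (by omega)]
      simp
  exact hfinal

end Stmt2Aux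

/-- For every Eulerian poset `P` of positive rank,
`∑_{⊥ ≤ x ≤ ⊤} G([⊥,x], t) G([x,⊤]*, t) (-1)^{rk[x,⊤]} = 0`. -/
theorem stmt2 {α : Type*} [Fintype α] [PartialOrder α] [BoundedOrder α]
    (rk : α → ℕ) (hE : EulerianRank rk) (hpos : 0 < rk (⊤ : α))
    (G H Gd Hd : α → α → Polynomial ℤ)
    (hGH : IsGH rk G H) (hGHd : IsGHDual rk Gd Hd) :
    ∑ x : α, G ⊥ x * Gd x ⊤ * (-1 : Polynomial ℤ) ^ (rk (⊤ : α) - rk x) = 0 := by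
  have hbot : (⊥ : α) < ⊤ := by
    rcases (bot_le : (⊥ : α) ≤ ⊤).eq_or_lt with h | h
    · exfalso
      have h0 := hE.rk_bot
      rw [← h] at hpos
      omega
    · exact h
  have h := Stmt2Aux.T_zero hE hGH hGHd (rk (⊤ : α) - rk (⊥ : α)) ⊥ ⊤ hbot rfl
  have hfil : (Finset.univ.filter fun x : α => ⊥ ≤ x ∧ x ≤ ⊤) = Finset.univ := by
    apply Finset.filter_true_of_mem
    intro x _
    exact ⟨bot_le, le_top⟩
  rw [hfil] at h
  exact h
end

section
/- For every Eulerian poset P = [0̂,1̂] of rank d, the polynomial B(P;u,v) satisfies the closed formula B(P;u,v) = Σ_{0̂ ≤ x ≤ 1̂} G([x,1̂]*, u⁻¹v) · (-u)^{rk 1̂ − rk x} · G([0̂,x], uv). -/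
open Polynomial
open scoped Classical

/-- Evaluation of an integer polynomial at an element of a field. -/
noncomputable def evP {F : Type*} [Field F] (t : F) (p : Polynomial ℤ) : F :=
  Polynomial.eval₂ (Int.castRingHom F) t p

open scoped Classical in
/-- `B` satisfies the defining recursion of the `B`-polynomials of Batyrev–Borisov
(evaluated at the pair `(u,v)` of elements of a field `F`):
`B(P;u,v) = 1` in rank `0`, and
`∑_{a ≤ x ≤ b} B([a,x];u,v) u^{d-ρ(x)} G([x,b], u⁻¹v) = G([a,b], uv)`. -/
structure IsB {α : Type*} [Fintype α] [PartialOrder α] {F : Type*} [Field F]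
    (rk : α → ℕ) (G : α → α → Polynomial ℤ) (u v : F) (B : α → α → F) : Prop where
  B_refl : ∀ a : α, B a a = 1
  B_rec : ∀ a b : α, a ≤ b →
    ∑ x ∈ Finset.univ.filter (fun x => a ≤ x ∧ x ≤ b),
        B a x * u ^ (rk b - rk x) * evP (v / u) (G x b)
      = evP (u * v) (G a b)

/-
Since `(-1)^(ρ(y) - ρ(x))` is the Möbius function of an Eulerian poset, the polynomials
`F[a,b] = ∑_{a ≤ x ≤ b} (X - 1)^(ρ(x) - ρ(a)) G[x,b]` and their duals satisfy
`∑_y (-1)^(ρ(y) - ρ(a)) F*[a,y] F[y,b] = ∑_x (-1)^(ρ(x) - ρ(a)) G*[a,x] G[x,b]`.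
As `F[a,b] = G[a,b] - (1 - X) H[a,b]` has no terms of degree below half the rank, the left side is
divisible by `X^⌈d/2⌉`, while the right side has degree below `d/2`; hence it vanishes for `a < b`
(Stanley's inversion `∑_x (-1)^(ρ(x) - ρ(a)) G*[a,x] G[x,b] = δ(a,b)`). By this inversion the
proposed closed formula satisfies the recursion defining `B`, which is unitriangular and so has
a unique solution.
-/

open Finset Polynomial

theorem Monotone.pow_sub_mul_pow_sub {α : Type*} [Preorder α] {M : Type*} [Monoid M] {rk : α → ℕ}
    (hrk : Monotone rk) (t : M) {a b c : α} (hab : a ≤ b) (hbc : b ≤ c) :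
    t ^ (rk b - rk a) * t ^ (rk c - rk b) = t ^ (rk c - rk a) := by
  rw [← pow_add, add_comm, Nat.sub_add_sub_cancel (hrk hbc) (hrk hab)]

section Intervals

variable {α : Type*} [PartialOrder α] [LocallyFiniteOrder α]

theorem Finset.sum_Icc_sum_Icc_comm {M : Type*} [AddCommMonoid M] (f : α → α → M) (a b : α) :
    ∑ x ∈ Icc a b, ∑ y ∈ Icc a x, f y x = ∑ y ∈ Icc a b, ∑ x ∈ Icc y b, f y x :=
  sum_comm' fun x y => by
    simp only [mem_Icc]
    exact ⟨fun ⟨⟨_, hxb⟩, hay, hyx⟩ => ⟨⟨hyx, hxb⟩, hay, hyx.trans hxb⟩,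
      fun ⟨⟨hyx, hxb⟩, hay, _⟩ => ⟨⟨hay.trans hyx, hxb⟩, hay, hyx⟩⟩

theorem eq_of_sum_Icc_mul_eq_sum_Icc_mul [WellFoundedLT α] {R : Type*} [Ring R]
    {B B' K : α → α → R} (hK : ∀ x, K x x = 1)
    (h : ∀ a b, a ≤ b → ∑ x ∈ Icc a b, B a x * K x b = ∑ x ∈ Icc a b, B' a x * K x b)
    {a b : α} (hab : a ≤ b) : B a b = B' a b := by
  induction b using WellFoundedLT.induction with
  | _ b ih =>
    have hb := h a b hab
    rw [← Ico_insert_right hab, sum_insert right_notMem_Ico, sum_insert right_notMem_Ico, hK,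
      mul_one, mul_one, sum_congr rfl fun x hx => by rw [ih x (mem_Ico.1 hx).2 (mem_Ico.1 hx).1],
      add_left_inj] at hb
    exact hb

variable {R : Type*} [CommRing R] {rk : α → ℕ}

theorem sum_Icc_neg_one_pow_mul_sum_mul_sum (hrk : Monotone rk)
    (hμ : ∀ a b : α, a ≤ b → ∑ y ∈ Icc a b, (-1 : R) ^ (rk y - rk a) = if a = b then 1 else 0)
    (t : R) (f g : α → α → R) (a b : α) :
    ∑ y ∈ Icc a b, (-1) ^ (rk y - rk a) *
        ((∑ z ∈ Icc a y, f a z * t ^ (rk y - rk z)) * ∑ x ∈ Icc y b, t ^ (rk x - rk y) * g x b)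
      = ∑ z ∈ Icc a b, (-1) ^ (rk z - rk a) * (f a z * g z b) := by
  have hexpand : ∀ y ∈ Icc a b, (-1) ^ (rk y - rk a) *
      ((∑ z ∈ Icc a y, f a z * t ^ (rk y - rk z)) * ∑ x ∈ Icc y b, t ^ (rk x - rk y) * g x b)
      = ∑ z ∈ Icc a y, ∑ x ∈ Icc y b, (-1) ^ (rk y - rk a) *
          (f a z * t ^ (rk y - rk z) * (t ^ (rk x - rk y) * g x b)) := fun y _ => by
    rw [sum_mul_sum, mul_sum]
    simp only [mul_sum]
  rw [sum_congr rfl hexpand, sum_Icc_sum_Icc_comm (fun z y => ∑ x ∈ Icc y b, (-1) ^ (rk y - rk a) *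
    (f a z * t ^ (rk y - rk z) * (t ^ (rk x - rk y) * g x b)))]
  refine sum_congr rfl fun z hz => ?_
  rw [← sum_Icc_sum_Icc_comm (fun y x => (-1) ^ (rk y - rk a) *
    (f a z * t ^ (rk y - rk z) * (t ^ (rk x - rk y) * g x b)))]
  have hcollapse : ∀ x ∈ Icc z b, ∑ y ∈ Icc z x, (-1) ^ (rk y - rk a) *
      (f a z * t ^ (rk y - rk z) * (t ^ (rk x - rk y) * g x b))
      = (-1) ^ (rk z - rk a) * (t ^ (rk x - rk z) * (f a z * g x b)) *
        if z = x then 1 else 0 := by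
    intro x hx
    rw [← hμ z x (mem_Icc.1 hx).1, mul_sum]
    refine sum_congr rfl fun y hy => ?_
    rw [← hrk.pow_sub_mul_pow_sub (-1) (mem_Icc.1 hz).1 (mem_Icc.1 hy).1,
      ← hrk.pow_sub_mul_pow_sub t (mem_Icc.1 hy).1 (mem_Icc.1 hy).2]
    ring
  rw [sum_congr rfl hcollapse]
  simp [mem_Icc.1 hz]

theorem sum_Icc_sum_Icc_mul_pow_mul_eq (hrk : Monotone rk) (g gd p : α → α → R) (u : R)
    (hinv : ∀ a b : α, a ≤ b →
      ∑ x ∈ Icc a b, (-1) ^ (rk x - rk a) * (gd a x * g x b) = if a = b then 1 else 0)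
    {a b : α} (hab : a ≤ b) :
    ∑ x ∈ Icc a b, (∑ z ∈ Icc a x, gd z x * (-u) ^ (rk x - rk z) * p a z)
        * u ^ (rk b - rk x) * g x b = p a b := by
  simp only [sum_mul]
  rw [sum_Icc_sum_Icc_comm (fun z x => gd z x * (-u) ^ (rk x - rk z) * p a z
    * u ^ (rk b - rk x) * g x b)]
  have hcollapse : ∀ z ∈ Icc a b, ∑ x ∈ Icc z b, gd z x * (-u) ^ (rk x - rk z) * p a z
      * u ^ (rk b - rk x) * g x b = p a z * u ^ (rk b - rk z) * if z = b then 1 else 0 := by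
    intro z hz
    rw [← hinv z b (mem_Icc.1 hz).2, mul_sum]
    refine sum_congr rfl fun x hx => ?_
    rw [← hrk.pow_sub_mul_pow_sub u (mem_Icc.1 hx).1 (mem_Icc.1 hx).2, neg_pow]
    ring
  rw [sum_congr rfl hcollapse]
  simp [hab]

end Intervals

theorem coeff_truncHalf (d : ℕ) (p : ℤ[X]) (i : ℕ) :
    (truncHalf d p).coeff i = if 2 * i < d then p.coeff i else 0 := by
  simp only [truncHalf, finsetSum_coeff, coeff_C_mul, coeff_X_pow, mul_ite, mul_one, mul_zero,
    sum_ite_eq, mem_range, show i < (d + 1) / 2 ↔ 2 * i < d by omega]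

theorem natDegree_truncHalf_le (d : ℕ) (p : ℤ[X]) : (truncHalf d p).natDegree ≤ (d - 1) / 2 :=
  natDegree_le_iff_coeff_eq_zero.2 fun i hi => by rw [coeff_truncHalf, if_neg (by omega)]

theorem X_pow_dvd_truncHalf_sub (d : ℕ) (p : ℤ[X]) : X ^ ((d + 1) / 2) ∣ truncHalf d p - p :=
  X_pow_dvd_iff.2 fun i hi => by rw [coeff_sub, coeff_truncHalf, if_pos (by omega), sub_self]

section Eulerian

variable {α : Type*} [Fintype α] [PartialOrder α] [BoundedOrder α] {rk : α → ℕ}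

theorem EulerianRank.strictMono (hE : EulerianRank rk) : StrictMono rk := by
  intro a b hab
  induction b using WellFoundedLT.induction with
  | _ b ih =>
    obtain ⟨c, hac, hcb⟩ := exists_le_covBy_of_lt hab
    rw [hE.rk_covby c b hcb]
    rcases hac.eq_or_lt with rfl | hac
    · omega
    · have := ih c hcb.lt hac
      omega

variable [LocallyFiniteOrder α]

theorem EulerianRank.sum_Icc_neg_one_pow {R : Type*} [Ring R] (hE : EulerianRank rk) {a b : α}
    (hab : a ≤ b) : ∑ y ∈ Icc a b, (-1 : R) ^ (rk y - rk a) = if a = b then 1 else 0 := by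
  rcases hab.eq_or_lt with rfl | hlt
  · simp
  rw [if_neg hlt.ne]
  have hcard := hE.eulerian a b hlt
  have hsum : ∑ y ∈ Icc a b, (-1 : R) ^ rk y = 0 := by
    simp only [neg_one_pow_eq_ite, sum_ite, sum_const, filter_filter, ← filter_le_le_eq_Icc]
    simp only [and_assoc, hcard, ← smul_add, add_neg_cancel, smul_zero]
  have hshift : ∑ y ∈ Icc a b, (-1 : R) ^ rk y
      = (∑ y ∈ Icc a b, (-1 : R) ^ (rk y - rk a)) * (-1) ^ rk a := by
    rw [sum_mul]
    refine sum_congr rfl fun y hy => ?_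
    rw [← pow_add, Nat.sub_add_cancel (hE.strictMono.monotone (mem_Icc.1 hy).1)]
  rwa [hshift, (isUnit_neg_one.pow _).mul_left_eq_zero] at hsum

end Eulerian

section GPolynomials

variable {α : Type*} [Fintype α] [PartialOrder α] {rk : α → ℕ} {G H Gd Hd : α → α → ℤ[X]}
  {a b : α}

-- For `a = b` the truncated subtraction makes the bound `0`, matching `G a a = 1`.
theorem IsGH.natDegree_le (hGH : IsGH rk G H) (hab : a ≤ b) :
    (G a b).natDegree ≤ (rk b - rk a - 1) / 2 := by
  rcases hab.eq_or_lt with rfl | hlt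
  · simp [hGH.G_refl]
  · rw [hGH.G_eq a b hlt]
    exact natDegree_truncHalf_le _ _

theorem IsGHDual.natDegree_le (hGHd : IsGHDual rk Gd Hd) (hab : a ≤ b) :
    (Gd a b).natDegree ≤ (rk b - rk a - 1) / 2 := by
  rcases hab.eq_or_lt with rfl | hlt
  · simp [hGHd.G_refl]
  · rw [hGHd.G_eq a b hlt]
    exact natDegree_truncHalf_le _ _

variable [BoundedOrder α] [LocallyFiniteOrder α]

theorem IsGH.sum_Icc_eq_truncHalf_sub (hE : EulerianRank rk) (hGH : IsGH rk G H) (hab : a < b) :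
    ∑ x ∈ Icc a b, (X - 1) ^ (rk x - rk a) * G x b
      = truncHalf (rk b - rk a) ((1 - X) * H a b) - (1 - X) * H a b := by
  rw [← Ioc_insert_left hab.le, sum_insert left_notMem_Ioc, ← hGH.G_eq a b hab,
    hGH.H_eq a b hab, filter_lt_le_eq_Ioc, sub_eq_add_neg (G a b), mul_sum, ← sum_neg_distrib,
    Nat.sub_self, pow_zero, one_mul]
  congr 1
  refine sum_congr rfl fun x hx => ?_
  obtain ⟨k, hk⟩ : ∃ k, rk x - rk a = k + 1 :=
    ⟨rk x - rk a - 1, by have := hE.strictMono (mem_Ioc.1 hx).1; omega⟩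
  rw [hk, Nat.add_sub_cancel]
  ring

theorem IsGHDual.sum_Icc_eq_truncHalf_sub (hE : EulerianRank rk) (hGHd : IsGHDual rk Gd Hd)
    (hab : a < b) :
    ∑ x ∈ Icc a b, Gd a x * (X - 1) ^ (rk b - rk x)
      = truncHalf (rk b - rk a) ((1 - X) * Hd a b) - (1 - X) * Hd a b := by
  rw [← Ico_insert_right hab.le, sum_insert right_notMem_Ico, ← hGHd.G_eq a b hab,
    hGHd.H_eq a b hab, filter_le_lt_eq_Ico, sub_eq_add_neg (Gd a b), mul_sum, ← sum_neg_distrib,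
    Nat.sub_self, pow_zero, mul_one]
  congr 1
  refine sum_congr rfl fun x hx => ?_
  obtain ⟨k, hk⟩ : ∃ k, rk b - rk x = k + 1 :=
    ⟨rk b - rk x - 1, by have := hE.strictMono (mem_Ico.1 hx).2; omega⟩
  rw [hk, Nat.add_sub_cancel]
  ring

theorem IsGH.X_pow_dvd_sum_Icc (hE : EulerianRank rk) (hGH : IsGH rk G H) (hab : a ≤ b) :
    X ^ ((rk b - rk a + 1) / 2) ∣ ∑ x ∈ Icc a b, (X - 1) ^ (rk x - rk a) * G x b := by
  rcases hab.eq_or_lt with rfl | hlt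
  · simp
  · rw [hGH.sum_Icc_eq_truncHalf_sub hE hlt]
    exact X_pow_dvd_truncHalf_sub _ _

theorem IsGHDual.X_pow_dvd_sum_Icc (hE : EulerianRank rk) (hGHd : IsGHDual rk Gd Hd)
    (hab : a ≤ b) :
    X ^ ((rk b - rk a + 1) / 2) ∣ ∑ x ∈ Icc a b, Gd a x * (X - 1) ^ (rk b - rk x) := by
  rcases hab.eq_or_lt with rfl | hlt
  · simp
  · rw [hGHd.sum_Icc_eq_truncHalf_sub hE hlt]
    exact X_pow_dvd_truncHalf_sub _ _

theorem IsGH.sum_Icc_neg_one_pow_mul_dual_mul (hE : EulerianRank rk) (hGH : IsGH rk G H)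
    (hGHd : IsGHDual rk Gd Hd) (hab : a ≤ b) :
    ∑ x ∈ Icc a b, (-1 : ℤ[X]) ^ (rk x - rk a) * (Gd a x * G x b) = if a = b then 1 else 0 := by
  rcases hab.eq_or_lt with rfl | hlt
  · simp [hGH.G_refl, hGHd.G_refl]
  rw [if_neg hlt.ne]
  have hrk := hE.strictMono
  have hrab : rk a < rk b := hrk hlt
  have hdvd : X ^ ((rk b - rk a + 1) / 2)
      ∣ ∑ x ∈ Icc a b, (-1 : ℤ[X]) ^ (rk x - rk a) * (Gd a x * G x b) := by
    rw [← sum_Icc_neg_one_pow_mul_sum_mul_sum hrk.monotone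
      (fun _ _ h => hE.sum_Icc_neg_one_pow h) (X - 1) Gd G a b]
    refine dvd_sum fun y hy => dvd_mul_of_dvd_right ?_ _
    obtain ⟨hay, hyb⟩ := mem_Icc.1 hy
    have := hrk.monotone hay
    have := hrk.monotone hyb
    have hprod := mul_dvd_mul (hGHd.X_pow_dvd_sum_Icc hE hay) (hGH.X_pow_dvd_sum_Icc hE hyb)
    rw [← pow_add] at hprod
    exact (pow_dvd_pow _ (by omega)).trans hprod
  have hdeg : (∑ x ∈ Icc a b, (-1 : ℤ[X]) ^ (rk x - rk a) * (Gd a x * G x b)).natDegree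
      ≤ (rk b - rk a - 1) / 2 := by
    refine natDegree_sum_le_of_forall_le _ _ fun x hx => ?_
    obtain ⟨hax, hxb⟩ := mem_Icc.1 hx
    have hGd := hGHd.natDegree_le hax
    have hG := hGH.natDegree_le hxb
    have := hrk.monotone hax
    have := hrk.monotone hxb
    refine (natDegree_mul_le_of_le (m := 0) (by simp) (natDegree_mul_le_of_le hGd hG)).trans ?_
    omega
  refine eq_zero_of_dvd_of_natDegree_lt hdvd ?_
  rw [natDegree_X_pow]
  omega

end GPolynomials

theorem evP_eq_eval₂RingHom {F : Type*} [Field F] (t : F) :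
    evP t = eval₂RingHom (Int.castRingHom F) t :=
  rfl

theorem stmt3_general {α : Type*} [Fintype α] [PartialOrder α] [BoundedOrder α]
    (rk : α → ℕ) (hE : EulerianRank rk)
    (G H Gd Hd : α → α → Polynomial ℤ)
    (hGH : IsGH rk G H) (hGHd : IsGHDual rk Gd Hd)
    {F : Type*} [Field F] (u v : F)
    (B : α → α → F) (hB : IsB rk G u v B) :
    B ⊥ ⊤ = ∑ x : α, evP (v / u) (Gd x ⊤) * (-u) ^ (rk (⊤ : α) - rk x)
      * evP (u * v) (G ⊥ x) := by
  let : LocallyFiniteOrder α := Fintype.toLocallyFiniteOrder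
  have hinv : ∀ a b : α, a ≤ b → ∑ x ∈ Icc a b,
      (-1) ^ (rk x - rk a) * (evP (v / u) (Gd a x) * evP (v / u) (G x b))
        = if a = b then 1 else 0 := fun a b hab => by
    simpa only [evP_eq_eval₂RingHom, map_sum, map_mul, map_pow, map_neg, map_one, map_zero,
      apply_ite] using congrArg (evP (v / u)) (hGH.sum_Icc_neg_one_pow_mul_dual_mul hE hGHd hab)
  have hrec : ∀ a b : α, a ≤ b →
      ∑ x ∈ Icc a b, B a x * (u ^ (rk b - rk x) * evP (v / u) (G x b))
        = ∑ x ∈ Icc a b, (∑ z ∈ Icc a x, evP (v / u) (Gd z x) * (-u) ^ (rk x - rk z)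
            * evP (u * v) (G a z)) * (u ^ (rk b - rk x) * evP (v / u) (G x b)) := by
    intro a b hab
    simp only [← mul_assoc]
    rw [← filter_le_le_eq_Icc, hB.B_rec a b hab, filter_le_le_eq_Icc]
    exact (sum_Icc_sum_Icc_mul_pow_mul_eq hE.strictMono.monotone _ _
      (fun a z => evP (u * v) (G a z)) u hinv hab).symm
  rw [eq_of_sum_Icc_mul_eq_sum_Icc_mul (fun x => by simp [hGH.G_refl, evP]) hrec bot_le,
    Icc_bot_top]

/-- For every Eulerian poset `P = [⊥,⊤]`, the polynomial `B(P;u,v)`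
satisfies `B(P;u,v) = ∑_{⊥ ≤ x ≤ ⊤} G([x,⊤]*, u⁻¹v) (-u)^{rk ⊤ - rk x} G([⊥,x], uv)`. -/
theorem stmt3 {α : Type*} [Fintype α] [PartialOrder α] [BoundedOrder α]
    (rk : α → ℕ) (hE : EulerianRank rk)
    (G H Gd Hd : α → α → Polynomial ℤ)
    (hGH : IsGH rk G H) (hGHd : IsGHDual rk Gd Hd)
    {F : Type*} [Field F] (u v : F) (hu : u ≠ 0)
    (B : α → α → F) (hB : IsB rk G u v B) :
    B ⊥ ⊤ = ∑ x : α, evP (v / u) (Gd x ⊤) * (-u) ^ (rk (⊤ : α) - rk x)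
      * evP (u * v) (G ⊥ x) :=
  stmt3_general rk hE G H Gd Hd hGH hGHd u v B hB
end

section
/- If P is a Boolean lattice (the poset of subsets of a finite set of size d, ordered by inclusion), then G(P,t) = 1. -/
open Polynomial
open scoped Classical

/-! By induction on `#t - #s`, `G s t = 1` for every interval `[s, t]` of subsets: if all the
`G x t` with `s < x ≤ t` are `1`, then `(1 - X) H s t = -∑_{s < x ≤ t} (X - 1)^{#x - #s}`, which
the binomial theorem evaluates to `1 - X^n` with `n = #t - #s ≥ 1`, and truncating that below
degree `n / 2` leaves `1`. -/

open Finset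

section BooleanInterval

variable {β : Type*} [DecidableEq β]

theorem Finset.sum_Icc_pow_card_sub {R : Type*} [CommSemiring R] {s t : Finset β} (h : s ⊆ t)
    (a : R) : ∑ x ∈ Icc s t, a ^ (#x - #s) = (a + 1) ^ (#t - #s) := by
  have hdisj : ∀ u ∈ (t \ s).powerset, Disjoint s u := fun u hu =>
    (disjoint_of_subset_left (mem_powerset.1 hu) sdiff_disjoint).symm
  have hinj : Set.InjOn (s ∪ ·) (t \ s).powerset := fun u hu v hv huv => by
    rw [← union_sdiff_cancel_left (hdisj u hu), ← union_sdiff_cancel_left (hdisj v hv)]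
    exact congrArg (· \ s) huv
  rw [Icc_eq_image_powerset h, sum_image hinj, ← card_sdiff_of_subset h,
    ← sum_pow_mul_eq_add_pow]
  refine sum_congr rfl fun u hu => ?_
  rw [card_union_of_disjoint (hdisj u hu), Nat.add_sub_cancel_left, one_pow, mul_one]

theorem Finset.sum_Ioc_pow_card_sub {R : Type*} [CommRing R] {s t : Finset β} (h : s ⊆ t)
    (a : R) : ∑ x ∈ Ioc s t, a ^ (#x - #s) = (a + 1) ^ (#t - #s) - 1 := by
  rw [← sum_Icc_pow_card_sub h, ← Ioc_insert_left h, sum_insert left_notMem_Ioc,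
    Nat.sub_self, pow_zero, add_sub_cancel_left]

end BooleanInterval

theorem truncHalf_one_sub_X_pow {n : ℕ} (hn : n ≠ 0) : truncHalf n (1 - X ^ n) = 1 := by
  rw [truncHalf, sum_eq_single_of_mem 0 (by simp; omega)]
  · simp [hn.symm]
  · intro i hi hi0
    have : i ≠ n := by have := mem_range.1 hi; omega
    simp [coeff_one, coeff_X_pow, hi0, this]

theorem IsGH.G_eq_one_of_subset {β : Type*} [Fintype β] [DecidableEq β]
    {G H : Finset β → Finset β → ℤ[X]} (hGH : IsGH (fun s : Finset β => #s) G H)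
    {s t : Finset β} (hst : s ⊆ t) : G s t = 1 := by
  obtain rfl | hlt := eq_or_ssubset_of_subset hst
  · exact hGH.G_refl s
  have hH : (1 - X) * H s t = 1 - X ^ (#t - #s) := by
    rw [hGH.H_eq s t hlt, mul_sum]
    calc _ = ∑ x ∈ Ioc s t, -((X : ℤ[X]) - 1) ^ (#x - #s) :=
          sum_congr (by ext; simp) fun x hx => ?_
      _ = 1 - X ^ (#t - #s) := by rw [sum_neg_distrib, sum_Ioc_pow_card_sub hst]; ring
    obtain ⟨hsx, hxt⟩ := mem_Ioc.1 hx
    obtain ⟨k, hk⟩ :=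
      Nat.exists_eq_add_one_of_ne_zero (Nat.sub_ne_zero_of_lt (card_lt_card hsx))
    rw [hGH.G_eq_one_of_subset hxt, hk, Nat.add_sub_cancel, pow_succ]
    ring
  rw [hGH.G_eq s t hlt, hH, truncHalf_one_sub_X_pow (Nat.sub_ne_zero_of_lt (card_lt_card hlt))]
termination_by #t - #s
decreasing_by
  have := card_le_card hxt
  have := card_lt_card hsx
  omega

theorem stmt5_general {β : Type*} [Fintype β]
    (G H : Finset β → Finset β → Polynomial ℤ)
    (hGH : IsGH (fun s : Finset β => s.card) G H) :
    G (⊥ : Finset β) (⊤ : Finset β) = 1 := by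
  classical
  exact hGH.G_eq_one_of_subset (empty_subset _)

/-- If `P` is a Boolean lattice (the poset of subsets of a finite
set of size `d`, ordered by inclusion), then `G(P,t) = 1`. -/
theorem stmt5 {β : Type*} [Fintype β] [DecidableEq β]
    (G H : Finset β → Finset β → Polynomial ℤ)
    (hGH : IsGH (fun s : Finset β => s.card) G H) :
    G (⊥ : Finset β) (⊤ : Finset β) = 1 :=
  stmt5_general G H hGH
end

section
/- The mirror duality E_st(Y;u,v) = (−u)^{d−1} E_st(Y*; u⁻¹, v) follows formally from the decomposition E_st(Y;u,v) = Σ_{C⊆K} (uv)⁻¹(−u)^{dim C} S̃(C,u⁻¹v) S̃(C*,uv), the duality S̃(C,t) = t^{dim C} S̃(C,t⁻¹), and the bijection C ↔ C* between faces of K and K* with dim C + dim C* = d+1. -/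
/-- The mirror duality
`E_st(Y;u,v) = (-u)^{d-1} E_st(Y*;u⁻¹,v)`
follows formally from:
(a) the decomposition `E_st(Y;u,v) = ∑_{C ⊆ K} (uv)⁻¹ (-u)^{dim C} S̃(C,u⁻¹v) S̃(C*,uv)`
    (hypotheses `hEY` and `hEYd`, for `Y ⊂ Proj ℂ[K]` and `Y* ⊂ Proj ℂ[K*]`);
(b) the duality `S̃(C,t) = t^{dim C} S̃(C,t⁻¹)` (hypotheses `hdualK`, `hdualKd`); and
(c) the inclusion-reversing bijection `C ↔ C*` between the faces of the dual reflexive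
    Gorenstein cones `K` and `K*` with `dim C + dim C* = d + 1` (the equivalence `e`
    and hypothesis `hdim`).

Here `A` and `Ad` are the (finite) sets of faces of `K` and `K*`, `dK`/`dKd` the
dimensions of the faces, `StK C`/`StKd C'` the polynomials `S̃(C,·)`, `S̃(C',·)`, and
`EstY u v`/`EstYd u v` the stringy `E`-functions `E_st(Y;u,v)`, `E_st(Y*;u,v)`. -/
theorem stmt16 {A Ad : Type*} [Fintype A] [Fintype Ad]
    (d : ℕ) (hd : 1 ≤ d)
    (e : A ≃ Ad) (dK : A → ℕ) (dKd : Ad → ℕ)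
    (hdim : ∀ C : A, dK C + dKd (e C) = d + 1)
    (StK : A → Polynomial ℤ) (StKd : Ad → Polynomial ℤ)
    {F : Type*} [Field F]
    (hdualK : ∀ (C : A) (t : F), t ≠ 0 → evP t (StK C) = t ^ dK C * evP t⁻¹ (StK C))
    (hdualKd : ∀ (C' : Ad) (t : F), t ≠ 0 →
      evP t (StKd C') = t ^ dKd C' * evP t⁻¹ (StKd C'))
    (EstY EstYd : F → F → F)
    (hEY : ∀ u v : F, u ≠ 0 → v ≠ 0 →
      EstY u v = ∑ C : A, (u * v)⁻¹ * (-u) ^ dK C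
        * evP (u⁻¹ * v) (StK C) * evP (u * v) (StKd (e C)))
    (hEYd : ∀ u v : F, u ≠ 0 → v ≠ 0 →
      EstYd u v = ∑ C' : Ad, (u * v)⁻¹ * (-u) ^ dKd C'
        * evP (u⁻¹ * v) (StKd C') * evP (u * v) (StK (e.symm C'))) :
    ∀ u v : F, u ≠ 0 → v ≠ 0 →
      EstY u v = (-u) ^ (d - 1) * EstYd u⁻¹ v := by
  intro u v hu hv
  obtain ⟨k, rfl⟩ : ∃ k, d = k + 1 := ⟨d - 1, (Nat.succ_pred_eq_of_pos hd).symm⟩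
  rw [hEY u v hu hv, hEYd u⁻¹ v (inv_ne_zero hu) hv, Finset.mul_sum,
    ← e.sum_comp fun C' => (-u) ^ (k + 1 - 1) * ((u⁻¹ * v)⁻¹ * (-u⁻¹) ^ dKd C'
        * evP (u⁻¹⁻¹ * v) (StKd C') * evP (u⁻¹ * v) (StK (e.symm C')))]
  refine Finset.sum_congr rfl fun C _ => ?_
  have hnu : (-u) ≠ 0 := neg_ne_zero.mpr hu
  have hm := hdim C
  simp only [inv_inv, Equiv.symm_apply_apply, Nat.add_sub_cancel]
  have key : (-u) ^ k * ((u⁻¹ * v)⁻¹ * (-u⁻¹) ^ dKd (e C))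
      = (u * v)⁻¹ * (-u) ^ dK C := by
    have hpow : (-u) ^ dK C * (-u) ^ dKd (e C) = (-u) ^ k * (-u) ^ 2 := by
      rw [← pow_add, ← pow_add, hm]
    rw [neg_inv, inv_pow]
    field_simp
    ring_nf
    ring_nf at hpow
    linear_combination -hpow
  calc (u * v)⁻¹ * (-u) ^ dK C * evP (u⁻¹ * v) (StK C) * evP (u * v) (StKd (e C))
      = ((u * v)⁻¹ * (-u) ^ dK C) * (evP (u⁻¹ * v) (StK C) * evP (u * v) (StKd (e C))) := by ring
    _ = ((-u) ^ k * ((u⁻¹ * v)⁻¹ * (-u⁻¹) ^ dKd (e C))) * (evP (u⁻¹ * v) (StK C) * evP (u * v) (StKd (e C))) := by rw [key]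
    _ = _ := by ring
end
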